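/- arXiv:1204.5519 — 3 statements merged into one kernel-verified Lean document; each statement's English description precedes it below -/
import Mathlib

section
/- Fix finite nonempty sets Θ, Ω, A, and let C°° be the set of pairs (u,μ) ∈ ℝ^{Θ×Ω×A} × Δ(Ω×Θ) with μ(ω,θ) > 0 for every ω ∈ Ω and θ ∈ Θ (non-degenerate contexts), equipped with the standard topology. Then the optimal no-positive-transfers Pricing Outcomes revenue R_p : C°° → ℝ is continuous. -/
open Finset Filter

noncomputable section

variable {Θ Ω A : Type*}

/-- `p` is a probability distribution on the finite set `Ω`. -/
def IsDist [Fintype Ω] (p : Ω → ℝ) : Prop :=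
  (∀ ω, 0 ≤ p ω) ∧ ∑ ω, p ω = 1

/-- `μ` is a joint probability distribution on `Ω × Θ`. -/
def IsJoint [Fintype Ω] [Fintype Θ] (μ : Ω → Θ → ℝ) : Prop :=
  (∀ ω θ, 0 ≤ μ ω θ) ∧ ∑ ω, ∑ θ, μ ω θ = 1

/-- The marginal `μ(ω) = ∑_θ μ(ω,θ)` of a joint distribution. -/
def margO [Fintype Θ] (μ : Ω → Θ → ℝ) (ω : Ω) : ℝ := ∑ θ, μ ω θ

/-- The marginal `μ(θ) = ∑_ω μ(ω,θ)` of a joint distribution. -/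
def margT [Fintype Ω] (μ : Ω → Θ → ℝ) (θ : Θ) : ℝ := ∑ ω, μ ω θ

/-- The value function `v_θ(q) = max_{a ∈ A} ∑_ω q(ω)·u(θ,ω,a)`. -/
def vfun [Fintype Ω] [Fintype A] [Nonempty A] (u : Θ → Ω → A → ℝ) (θ : Θ) (q : Ω → ℝ) : ℝ :=
  univ.sup' univ_nonempty fun a => ∑ ω, q ω * u θ ω a

/-- The matrix-vector product `D_θ q`, where `D_θ` is the diagonal matrix with entries
`μ(θ|ω) = μ(ω,θ)/μ(ω)`. -/
def Dq [Fintype Θ] (μ : Ω → Θ → ℝ) (θ : Θ) (q : Ω → ℝ) : Ω → ℝ :=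
  fun ω => μ ω θ / margO μ ω * q ω

/-- `1ᵀ D_θ q`. -/
def onesD [Fintype Θ] [Fintype Ω] (μ : Ω → Θ → ℝ) (θ : Θ) (q : Ω → ℝ) : ℝ :=
  ∑ ω, Dq μ θ q ω

/-- A feasible signal-representation for prior `pr`: a finitely supported distribution over
posteriors (each posterior being a distribution on `Ω`) averaging to the prior. -/
def FeasRep [Fintype Ω] (pr : Ω → ℝ) (x : (Ω → ℝ) →₀ ℝ) : Prop :=
  (∀ q ∈ x.support, IsDist q) ∧ (∀ q, 0 ≤ x q) ∧
  (∑ q ∈ x.support, x q = 1) ∧ ∀ ω, ∑ q ∈ x.support, x q * q ω = pr ω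

variable [Fintype Θ] [Fintype Ω] [Fintype A] [Nonempty A]

/-- Expected value `∑_q v_θ(D_θ q)·x(q)` that a type-`θ` buyer gets from
signal representation `x`. -/
def PMutil (u : Θ → Ω → A → ℝ) (μ : Ω → Θ → ℝ) (θ : Θ) (x : (Ω → ℝ) →₀ ℝ) : ℝ :=
  ∑ q ∈ x.support, vfun u θ (Dq μ θ q) * x q

/-- Validity (IR and IC) of a Pricing Mappings menu `{(x_θ, t_θ)}`. -/
def PMvalid (u : Θ → Ω → A → ℝ) (μ : Ω → Θ → ℝ)
    (x : Θ → ((Ω → ℝ) →₀ ℝ)) (t : Θ → ℝ) : Prop :=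
  (∀ θ, FeasRep (margO μ) (x θ)) ∧ (∀ θ, 0 ≤ t θ) ∧
  (∀ θ, vfun u θ (Dq μ θ (margO μ)) ≤ PMutil u μ θ (x θ) - margT μ θ * t θ) ∧
  (∀ θ θ', θ' ≠ θ →
    PMutil u μ θ (x θ') - margT μ θ * t θ' ≤ PMutil u μ θ (x θ) - margT μ θ * t θ)

/-- Revenue `∑_θ μ(θ)·t_θ` of a Pricing Mappings menu. -/
def PMrev (μ : Ω → Θ → ℝ) (t : Θ → ℝ) : ℝ := ∑ θ, margT μ θ * t θ

/-- `R_c(u,μ)`: the supremum of revenues of valid Pricing Mappings menus. -/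
def Rc (u : Θ → Ω → A → ℝ) (μ : Ω → Θ → ℝ) : ℝ :=
  sSup {r | ∃ x t, PMvalid u μ x t ∧ r = PMrev μ t}

/-- Net utility `∑_q [v_θ(D_θ q)·x(q) − (1ᵀD_θ q)·t̃(q)]` of a type-`θ` buyer
from a Pricing Outcomes contract `(x, tt)`. -/
def POutil (u : Θ → Ω → A → ℝ) (μ : Ω → Θ → ℝ) (θ : Θ)
    (x tt : (Ω → ℝ) →₀ ℝ) : ℝ :=
  ∑ q ∈ x.support ∪ tt.support,
    (vfun u θ (Dq μ θ q) * x q - onesD μ θ q * tt q)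

/-- Validity (feasibility, payments supported on signals, IR and IC) of a Pricing Outcomes
menu `{(x_θ, t̃_θ)}`. -/
def POvalid (u : Θ → Ω → A → ℝ) (μ : Ω → Θ → ℝ)
    (x tt : Θ → ((Ω → ℝ) →₀ ℝ)) : Prop :=
  (∀ θ, FeasRep (margO μ) (x θ)) ∧ (∀ θ, (tt θ).support ⊆ (x θ).support) ∧
  (∀ θ, vfun u θ (Dq μ θ (margO μ)) ≤ POutil u μ θ (x θ) (tt θ)) ∧
  (∀ θ θ', θ' ≠ θ →
    POutil u μ θ (x θ') (tt θ') ≤ POutil u μ θ (x θ) (tt θ))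

/-- Revenue `∑_θ ∑_q (1ᵀD_θ q)·t̃_θ(q)` of a Pricing Outcomes menu. -/
def POrev (μ : Ω → Θ → ℝ) (tt : Θ → ((Ω → ℝ) →₀ ℝ)) : ℝ :=
  ∑ θ, ∑ q ∈ (tt θ).support, onesD μ θ q * tt θ q

/-- `R(u,μ)`: the supremum of revenues of valid Pricing Outcomes menus. -/
def Rfull (u : Θ → Ω → A → ℝ) (μ : Ω → Θ → ℝ) : ℝ :=
  sSup {r | ∃ x tt, POvalid u μ x tt ∧ r = POrev μ tt}

/-- `R_p(u,μ)`: the supremum of revenues of valid Pricing Outcomes menus with no positive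
transfers to the buyer, i.e. all payments nonnegative. -/
def Rp (u : Θ → Ω → A → ℝ) (μ : Ω → Θ → ℝ) : ℝ :=
  sSup {r | ∃ x tt, POvalid u μ x tt ∧ (∀ θ q, 0 ≤ tt θ q) ∧ r = POrev μ tt}

/-- `max_a u(θ,ω,a)`. -/
def maxU (u : Θ → Ω → A → ℝ) (θ : Θ) (ω : Ω) : ℝ :=
  univ.sup' univ_nonempty fun a => u θ ω a

/-- The buyer surplus
`σ(θ) = ∑_ω μ(ω|θ)·max_a u(θ,ω,a) − max_a ∑_ω μ(ω|θ)·u(θ,ω,a)`. -/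
def surplus (u : Θ → Ω → A → ℝ) (μ : Ω → Θ → ℝ) (θ : Θ) : ℝ :=
  ∑ ω, μ ω θ / margT μ θ * maxU u θ ω -
    univ.sup' univ_nonempty fun a => ∑ ω, μ ω θ / margT μ θ * u θ ω a

/-- The full surplus `∑_θ μ(θ)·σ(θ)`. -/
def fullSurplus (u : Θ → Ω → A → ℝ) (μ : Ω → Θ → ℝ) : ℝ :=
  ∑ θ, margT μ θ * surplus u μ θ

/-- The sealed-envelope revenue `R_e(u,μ) = sup_{t ≥ 0} t·∑_{θ : μ(θ)>0, σ(θ) ≥ t} μ(θ)`. -/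
def Re (u : Θ → Ω → A → ℝ) (μ : Ω → Θ → ℝ) : ℝ :=
  sSup {r | ∃ t : ℝ, 0 ≤ t ∧
    r = t * ∑ θ, (if 0 < margT μ θ ∧ t ≤ surplus u μ θ then margT μ θ else 0)}

/-- The cell of the simplex on which, for each type `θ`, action `α θ` is optimal:
on this polytope every `v_θ` is linear. -/
def cellPM (u : Θ → Ω → A → ℝ) (α : Θ → A) : Set (Ω → ℝ) :=
  {q | IsDist q ∧ ∀ θ a, ∑ ω, q ω * u θ ω a ≤ ∑ ω, q ω * u θ ω (α θ)}

/-- `Q*(u)`: the set of vertices (extreme points) of the cells of the partition of the simplex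
into polytopes on which every `v_θ` is linear. -/
def Qstar (u : Θ → Ω → A → ℝ) : Set (Ω → ℝ) :=
  ⋃ α : Θ → A, Set.extremePoints ℝ (cellPM u α)

/-- The cell of the simplex on which, for each type `θ`, action `α θ` is optimal for the
transformed posterior `D_θ q`: on this polytope every `q ↦ v_θ(D_θ q)` is linear. -/
def cellPO (u : Θ → Ω → A → ℝ) (μ : Ω → Θ → ℝ) (α : Θ → A) : Set (Ω → ℝ) :=
  {q | IsDist q ∧ ∀ θ a, ∑ ω, Dq μ θ q ω * u θ ω a ≤ ∑ ω, Dq μ θ q ω * u θ ω (α θ)}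

/-- `Q*(u,μ)`: the set of vertices (extreme points) of the cells of the partition of the simplex
into polytopes on which every `q ↦ v_θ(D_θ q)` is linear. -/
def QstarD (u : Θ → Ω → A → ℝ) (μ : Ω → Θ → ℝ) : Set (Ω → ℝ) :=
  ⋃ α : Θ → A, Set.extremePoints ℝ (cellPO u μ α)

/-- The point mass at `ω`, as an element of `Δ(Ω)`. -/
def deltaP [DecidableEq Ω] (ω : Ω) : Ω → ℝ := fun ω' => if ω' = ω then 1 else 0

/-- The full-revelation signal representation: posterior `δ_ω` with probability `μ(ω)`. -/
def fullX [DecidableEq Ω] (μ : Ω → Θ → ℝ) : (Ω → ℝ) →₀ ℝ :=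
  ∑ ω, Finsupp.single (deltaP ω) (margO μ ω)

/-- The full-revelation payment function: `t̃(δ_ω) = μ(ω)·t(ω)`. -/
def fullT [DecidableEq Ω] (μ : Ω → Θ → ℝ) (t : Ω → ℝ) : (Ω → ℝ) →₀ ℝ :=
  ∑ ω, Finsupp.single (deltaP ω) (margO μ ω * t ω)


namespace RpAux
set_option linter.unusedSectionVars false

section Fsum
variable {Θ Ω A : Type*} [Fintype Ω]

/-- Sum of `y q * g q` over the support of `y`. -/
def fsum (y : (Ω → ℝ) →₀ ℝ) (g : (Ω → ℝ) → ℝ) : ℝ := ∑ q ∈ y.support, y q * g q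

lemma fsum_eq_subset {y : (Ω → ℝ) →₀ ℝ} {T : Finset (Ω → ℝ)} (hT : y.support ⊆ T)
    (g : (Ω → ℝ) → ℝ) : fsum y g = ∑ q ∈ T, y q * g q :=
  Finset.sum_subset hT fun q _ hq => by
    rw [Finsupp.notMem_support_iff.mp hq, zero_mul]

lemma fsum_add (y z : (Ω → ℝ) →₀ ℝ) (g : (Ω → ℝ) → ℝ) :
    fsum (y + z) g = fsum y g + fsum z g := by
  classical
  rw [fsum_eq_subset (Finsupp.support_add) g,
      fsum_eq_subset (Finset.subset_union_left : y.support ⊆ y.support ∪ z.support) g,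
      fsum_eq_subset (Finset.subset_union_right : z.support ⊆ y.support ∪ z.support) g,
      ← Finset.sum_add_distrib]
  exact Finset.sum_congr rfl fun q _ => by rw [Finsupp.add_apply, add_mul]

lemma fsum_smul (c : ℝ) (y : (Ω → ℝ) →₀ ℝ) (g : (Ω → ℝ) → ℝ) :
    fsum (c • y) g = c * fsum y g := by
  rw [fsum_eq_subset (Finsupp.support_smul) g, fsum, Finset.mul_sum]
  exact Finset.sum_congr rfl fun q _ => by
    rw [Finsupp.smul_apply, smul_eq_mul, mul_assoc]

lemma fsum_single (a : Ω → ℝ) (c : ℝ) (g : (Ω → ℝ) → ℝ) :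
    fsum (Finsupp.single a c) g = c * g a := by
  classical
  rcases eq_or_ne c 0 with h | h
  · simp [fsum, h]
  · rw [fsum, Finsupp.support_single_ne_zero a h, Finset.sum_singleton,
      Finsupp.single_eq_same]

lemma fsum_zero (g : (Ω → ℝ) → ℝ) : fsum (0 : (Ω → ℝ) →₀ ℝ) g = 0 := by
  simp [fsum]

lemma fsum_nonneg {y : (Ω → ℝ) →₀ ℝ} (hy : ∀ q, 0 ≤ y q) {g : (Ω → ℝ) → ℝ}
    (hg : ∀ q ∈ y.support, 0 ≤ g q) : 0 ≤ fsum y g :=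
  Finset.sum_nonneg fun q hq => mul_nonneg (hy q) (hg q hq)

lemma abs_fsum_le {y : (Ω → ℝ) →₀ ℝ} (hy : ∀ q, 0 ≤ y q) {g : (Ω → ℝ) → ℝ} {b : ℝ}
    (hb : ∀ q ∈ y.support, |g q| ≤ b) :
    |fsum y g| ≤ b * ∑ q ∈ y.support, y q := by
  calc |fsum y g| ≤ ∑ q ∈ y.support, |y q * g q| := Finset.abs_sum_le_sum_abs _ _
    _ ≤ ∑ q ∈ y.support, y q * b := Finset.sum_le_sum fun q hq => by
        rw [abs_mul, abs_of_nonneg (hy q)]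
        exact mul_le_mul_of_nonneg_left (hb q hq) (hy q)
    _ = b * ∑ q ∈ y.support, y q := by rw [← Finset.sum_mul, mul_comm]

lemma abs_fsum_sub_fsum_le {y : (Ω → ℝ) →₀ ℝ} (hy : ∀ q, 0 ≤ y q)
    {g h : (Ω → ℝ) → ℝ} {b : ℝ} (hb : ∀ q ∈ y.support, |g q - h q| ≤ b) :
    |fsum y g - fsum y h| ≤ b * ∑ q ∈ y.support, y q := by
  have he : fsum y g - fsum y h = fsum y (fun q => g q - h q) := by
    simp only [fsum, ← Finset.sum_sub_distrib, mul_sub]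
  rw [he]; exact abs_fsum_le hy hb

lemma fsum_le_fsum {y : (Ω → ℝ) →₀ ℝ} (hy : ∀ q, 0 ≤ y q) {g h : (Ω → ℝ) → ℝ}
    (hgh : ∀ q ∈ y.support, g q ≤ h q) : fsum y g ≤ fsum y h :=
  Finset.sum_le_sum fun q hq => mul_le_mul_of_nonneg_left (hgh q hq) (hy q)

lemma mul_total_le_fsum {y : (Ω → ℝ) →₀ ℝ} (hy : ∀ q, 0 ≤ y q) {g : (Ω → ℝ) → ℝ} {b : ℝ}
    (hb : ∀ q ∈ y.support, b ≤ g q) : b * ∑ q ∈ y.support, y q ≤ fsum y g := by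
  rw [mul_comm, Finset.sum_mul]
  exact Finset.sum_le_sum fun q hq => mul_le_mul_of_nonneg_left (hb q hq) (hy q)

lemma fsum_le_mul_total {y : (Ω → ℝ) →₀ ℝ} (hy : ∀ q, 0 ≤ y q) {g : (Ω → ℝ) → ℝ} {b : ℝ}
    (hb : ∀ q ∈ y.support, g q ≤ b) : fsum y g ≤ b * ∑ q ∈ y.support, y q := by
  rw [mul_comm, Finset.sum_mul]
  exact Finset.sum_le_sum fun q hq => mul_le_mul_of_nonneg_left (hb q hq) (hy q)

end Fsum

section Vfun
variable {Θ Ω A : Type*} [Fintype Ω] [Fintype A] [Nonempty A]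

lemma vfun_le {u : Θ → Ω → A → ℝ} {θ : Θ} {q : Ω → ℝ} {b : ℝ}
    (h : ∀ a, ∑ ω, q ω * u θ ω a ≤ b) : vfun u θ q ≤ b :=
  Finset.sup'_le _ _ fun a _ => h a

lemma le_vfun (u : Θ → Ω → A → ℝ) (θ : Θ) (q : Ω → ℝ) (a : A) :
    ∑ ω, q ω * u θ ω a ≤ vfun u θ q :=
  Finset.le_sup' (fun a => ∑ ω, q ω * u θ ω a) (Finset.mem_univ a)

lemma vfun_sub_le {u u' : Θ → Ω → A → ℝ} {θ : Θ} {q q' : Ω → ℝ} {b : ℝ}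
    (h : ∀ a, ∑ ω, q ω * u θ ω a - ∑ ω, q' ω * u' θ ω a ≤ b) :
    vfun u θ q - vfun u' θ q' ≤ b := by
  rw [sub_le_iff_le_add]
  refine vfun_le fun a => ?_
  have h1 := h a
  have h2 := le_vfun u' θ q' a
  linarith

lemma abs_vfun_sub_le {u u' : Θ → Ω → A → ℝ} {θ : Θ} {q q' : Ω → ℝ} {b : ℝ}
    (h : ∀ a, |∑ ω, q ω * u θ ω a - ∑ ω, q' ω * u' θ ω a| ≤ b) :
    |vfun u θ q - vfun u' θ q'| ≤ b := by
  rw [abs_le]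
  constructor
  · have := vfun_sub_le (u := u') (u' := u) (θ := θ) (q := q') (q' := q) (b := b)
      (fun a => by have := (abs_le.mp (h a)).1; linarith)
    linarith
  · exact vfun_sub_le fun a => (abs_le.mp (h a)).2

lemma abs_vfun_le {u : Θ → Ω → A → ℝ} {θ : Θ} {q : Ω → ℝ} {b : ℝ}
    (h : ∀ a, |∑ ω, q ω * u θ ω a| ≤ b) : |vfun u θ q| ≤ b := by
  rw [abs_le]
  constructor
  · obtain ⟨a⟩ := (inferInstance : Nonempty A)
    have h1 := (abs_le.mp (h a)).1
    have h2 := le_vfun u θ q a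
    linarith
  · exact vfun_le fun a => (abs_le.mp (h a)).2

end Vfun

section Decomp
variable {Θ Ω A : Type*} [Fintype Θ] [Fintype Ω] [Fintype A] [Nonempty A]

lemma POutil_eq (u : Θ → Ω → A → ℝ) (μ : Ω → Θ → ℝ) (θ : Θ) (x tt : (Ω → ℝ) →₀ ℝ) :
    POutil u μ θ x tt
      = fsum x (fun q => vfun u θ (Dq μ θ q)) - fsum tt (fun q => onesD μ θ q) := by
  classical
  have h1 : fsum x (fun q => vfun u θ (Dq μ θ q))
      = ∑ q ∈ x.support ∪ tt.support, x q * vfun u θ (Dq μ θ q) :=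
    fsum_eq_subset Finset.subset_union_left _
  have h2 : fsum tt (fun q => onesD μ θ q)
      = ∑ q ∈ x.support ∪ tt.support, tt q * onesD μ θ q :=
    fsum_eq_subset Finset.subset_union_right _
  rw [POutil, h1, h2, ← Finset.sum_sub_distrib]
  exact Finset.sum_congr rfl fun q _ => by ring

lemma POrev_eq (μ : Ω → Θ → ℝ) (tt : Θ → ((Ω → ℝ) →₀ ℝ)) :
    POrev μ tt = ∑ θ, fsum (tt θ) (fun q => onesD μ θ q) := by
  refine Finset.sum_congr rfl fun θ _ => Finset.sum_congr rfl fun q _ => mul_comm _ _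

lemma FeasRep_single {p : Ω → ℝ} (hp : IsDist p) : FeasRep p (Finsupp.single p 1) := by
  classical
  have hs : (Finsupp.single p (1 : ℝ)).support = {p} :=
    Finsupp.support_single_ne_zero p one_ne_zero
  refine ⟨?_, ?_, ?_, ?_⟩
  · intro q hq; rw [hs, Finset.mem_singleton] at hq; subst hq; exact hp
  · intro q; rw [Finsupp.single_apply]; split <;> norm_num
  · rw [hs, Finset.sum_singleton, Finsupp.single_eq_same]
  · intro ω; rw [hs, Finset.sum_singleton, Finsupp.single_eq_same, one_mul]

lemma margO_isDist {μ : Ω → Θ → ℝ} (hj : IsJoint μ) : IsDist (margO μ) :=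
  ⟨fun ω => Finset.sum_nonneg fun θ _ => hj.1 ω θ, by simpa [margO] using hj.2⟩

lemma zero_mem_Rp_set {u : Θ → Ω → A → ℝ} {μ : Ω → Θ → ℝ} (hj : IsJoint μ) :
    (0 : ℝ) ∈ {r | ∃ x tt, POvalid u μ x tt ∧ (∀ θ q, 0 ≤ tt θ q) ∧ r = POrev μ tt} := by
  classical
  have hp : IsDist (margO μ) := margO_isDist hj
  have hutil : ∀ θ : Θ, POutil u μ θ (Finsupp.single (margO μ) 1) 0
      = vfun u θ (Dq μ θ (margO μ)) := by
    intro θ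
    rw [POutil_eq, fsum_single, fsum_zero]
    ring
  refine ⟨fun _ => Finsupp.single (margO μ) 1, fun _ => 0,
    ⟨fun θ => FeasRep_single hp, fun θ => by simp, fun θ => le_of_eq (hutil θ).symm,
      fun θ θ' _ => le_refl _⟩, fun θ q => le_refl 0, by simp [POrev]⟩

end Decomp

section Bounds
variable {Θ Ω A : Type*} [Fintype Θ] [Fintype Ω] [Fintype A] [Nonempty A]

lemma margO_le_one {μ : Ω → Θ → ℝ} (hj : IsJoint μ) (ω : Ω) : margO μ ω ≤ 1 := by
  rw [← hj.2]
  exact Finset.single_le_sum (f := fun ω => ∑ θ, μ ω θ)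
    (fun i _ => Finset.sum_nonneg fun θ _ => hj.1 i θ) (Finset.mem_univ ω)

lemma le_margO {μ : Ω → Θ → ℝ} (hj : IsJoint μ) (θ : Θ) (ω : Ω) : μ ω θ ≤ margO μ ω :=
  Finset.single_le_sum (fun θ' _ => hj.1 ω θ') (Finset.mem_univ θ)

lemma margT_le_one {μ : Ω → Θ → ℝ} (hj : IsJoint μ) (θ : Θ) : ∑ ω, μ ω θ ≤ 1 := by
  rw [← hj.2]
  exact Finset.sum_le_sum fun ω _ => le_margO hj θ ω

variable [Nonempty Θ] {m U d : ℝ} {μ μ' : Ω → Θ → ℝ}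

lemma m_le_margO (hμ : ∀ ω θ, m ≤ μ ω θ) (hj : IsJoint μ) (ω : Ω) : m ≤ margO μ ω := by
  obtain ⟨θ0⟩ := (inferInstance : Nonempty Θ)
  exact le_trans (hμ ω θ0) (le_margO hj θ0 ω)

lemma margO_pos (hm : 0 < m) (hμ : ∀ ω θ, m ≤ μ ω θ) (hj : IsJoint μ) (ω : Ω) :
    0 < margO μ ω := lt_of_lt_of_le hm (m_le_margO hμ hj ω)

lemma ratio_nonneg (hm : 0 < m) (hμ : ∀ ω θ, m ≤ μ ω θ) (hj : IsJoint μ) (ω : Ω) (θ : Θ) :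
    0 ≤ μ ω θ / margO μ ω :=
  div_nonneg (hj.1 ω θ) (le_of_lt (margO_pos hm hμ hj ω))

lemma ratio_le_one (hm : 0 < m) (hμ : ∀ ω θ, m ≤ μ ω θ) (hj : IsJoint μ) (ω : Ω) (θ : Θ) :
    μ ω θ / margO μ ω ≤ 1 :=
  div_le_one_of_le₀ (le_margO hj θ ω) (le_of_lt (margO_pos hm hμ hj ω))

lemma m_le_ratio (hm : 0 < m) (hμ : ∀ ω θ, m ≤ μ ω θ) (hj : IsJoint μ) (ω : Ω) (θ : Θ) :
    m ≤ μ ω θ / margO μ ω := by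
  rw [le_div_iff₀ (margO_pos hm hμ hj ω)]
  calc m * margO μ ω ≤ m * 1 := by
        have := margO_le_one hj ω
        nlinarith
    _ = m := mul_one m
    _ ≤ μ ω θ := hμ ω θ
  
lemma Dq_nonneg (hm : 0 < m) (hμ : ∀ ω θ, m ≤ μ ω θ) (hj : IsJoint μ) {q : Ω → ℝ}
    (hq : ∀ ω, 0 ≤ q ω) (θ : Θ) (ω : Ω) : 0 ≤ Dq μ θ q ω :=
  mul_nonneg (ratio_nonneg hm hμ hj ω θ) (hq ω)

lemma Dq_le (hm : 0 < m) (hμ : ∀ ω θ, m ≤ μ ω θ) (hj : IsJoint μ) {q : Ω → ℝ}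
    (hq : ∀ ω, 0 ≤ q ω) (θ : Θ) (ω : Ω) : Dq μ θ q ω ≤ q ω := by
  have h1 := ratio_le_one hm hμ hj ω θ
  have h2 := hq ω
  calc Dq μ θ q ω = μ ω θ / margO μ ω * q ω := rfl
    _ ≤ 1 * q ω := by nlinarith
    _ = q ω := one_mul _

lemma onesD_le_one (hm : 0 < m) (hμ : ∀ ω θ, m ≤ μ ω θ) (hj : IsJoint μ) {q : Ω → ℝ}
    (hq : IsDist q) (θ : Θ) : onesD μ θ q ≤ 1 := by
  calc onesD μ θ q ≤ ∑ ω, q ω := Finset.sum_le_sum fun ω _ => Dq_le hm hμ hj hq.1 θ ω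
    _ = 1 := hq.2

lemma m_le_onesD (hm : 0 < m) (hμ : ∀ ω θ, m ≤ μ ω θ) (hj : IsJoint μ) {q : Ω → ℝ}
    (hq : IsDist q) (θ : Θ) : m ≤ onesD μ θ q := by
  have : ∀ ω, m * q ω ≤ Dq μ θ q ω := by
    intro ω
    have h1 := m_le_ratio hm hμ hj ω θ
    have h2 := hq.1 ω
    calc m * q ω ≤ μ ω θ / margO μ ω * q ω := by nlinarith
      _ = Dq μ θ q ω := rfl
  calc m = m * ∑ ω, q ω := by rw [hq.2, mul_one]
    _ = ∑ ω, m * q ω := Finset.mul_sum _ _ _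
    _ ≤ ∑ ω, Dq μ θ q ω := Finset.sum_le_sum fun ω _ => this ω
    _ = onesD μ θ q := rfl

lemma onesD_nonneg (hm : 0 < m) (hμ : ∀ ω θ, m ≤ μ ω θ) (hj : IsJoint μ) {q : Ω → ℝ}
    (hq : ∀ ω, 0 ≤ q ω) (θ : Θ) : 0 ≤ onesD μ θ q :=
  Finset.sum_nonneg fun ω _ => Dq_nonneg hm hμ hj hq θ ω

lemma abs_vfun_Dq_le {u : Θ → Ω → A → ℝ} (hm : 0 < m) (hμ : ∀ ω θ, m ≤ μ ω θ)
    (hj : IsJoint μ) (hU : ∀ θ ω a, |u θ ω a| ≤ U) {q : Ω → ℝ} (hq : IsDist q) (θ : Θ) :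
    |vfun u θ (Dq μ θ q)| ≤ U := by
  refine abs_vfun_le fun a => ?_
  calc |∑ ω, Dq μ θ q ω * u θ ω a| ≤ ∑ ω, |Dq μ θ q ω * u θ ω a| :=
        Finset.abs_sum_le_sum_abs _ _
    _ ≤ ∑ ω, q ω * U := Finset.sum_le_sum fun ω _ => by
        rw [abs_mul, abs_of_nonneg (Dq_nonneg hm hμ hj hq.1 θ ω)]
        have h1 := Dq_le hm hμ hj hq.1 θ ω
        have h2 := hU θ ω a
        have h3 := Dq_nonneg hm hμ hj hq.1 θ ω
        have h4 := abs_nonneg (u θ ω a)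
        nlinarith
    _ = U := by rw [← Finset.sum_mul, hq.2, one_mul]

lemma Dq_margO (hm : 0 < m) (hμ : ∀ ω θ, m ≤ μ ω θ) (hj : IsJoint μ) (θ : Θ) :
    Dq μ θ (margO μ) = fun ω => μ ω θ := by
  funext ω
  exact div_mul_cancel₀ (μ ω θ) (ne_of_gt (margO_pos hm hμ hj ω))

lemma abs_vfun_prior_le {u : Θ → Ω → A → ℝ} (hj : IsJoint μ) (hU0 : 0 ≤ U)
    (hU : ∀ θ ω a, |u θ ω a| ≤ U) (θ : Θ) :
    |vfun u θ (fun ω => μ ω θ)| ≤ U := by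
  refine abs_vfun_le fun a => ?_
  calc |∑ ω, μ ω θ * u θ ω a| ≤ ∑ ω, |μ ω θ * u θ ω a| := Finset.abs_sum_le_sum_abs _ _
    _ ≤ ∑ ω, μ ω θ * U := Finset.sum_le_sum fun ω _ => by
        rw [abs_mul, abs_of_nonneg (hj.1 ω θ)]
        have h2 := hU θ ω a
        have h3 := hj.1 ω θ
        have h4 := abs_nonneg (u θ ω a)
        nlinarith
    _ = (∑ ω, μ ω θ) * U := by rw [Finset.sum_mul]
    _ ≤ 1 * U := by
        have := margT_le_one hj θ
        have h5 : 0 ≤ ∑ ω, μ ω θ := Finset.sum_nonneg fun ω _ => hj.1 ω θ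
        nlinarith
    _ = U := one_mul U

lemma abs_sum_mul_sub (w w' f f' : Ω → ℝ) :
    |∑ ω, w ω * f ω - ∑ ω, w' ω * f' ω|
      ≤ ∑ ω, (|w ω - w' ω| * |f ω| + |w' ω| * |f ω - f' ω|) := by
  rw [← Finset.sum_sub_distrib]
  calc |∑ ω, (w ω * f ω - w' ω * f' ω)| ≤ ∑ ω, |w ω * f ω - w' ω * f' ω| :=
        Finset.abs_sum_le_sum_abs _ _
    _ ≤ ∑ ω, (|w ω - w' ω| * |f ω| + |w' ω| * |f ω - f' ω|) :=
        Finset.sum_le_sum fun ω _ => by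
          have he : w ω * f ω - w' ω * f' ω
              = (w ω - w' ω) * f ω + w' ω * (f ω - f' ω) := by ring
          rw [he]
          calc |(w ω - w' ω) * f ω + w' ω * (f ω - f' ω)|
              ≤ |(w ω - w' ω) * f ω| + |w' ω * (f ω - f' ω)| := abs_add_le _ _
            _ = |w ω - w' ω| * |f ω| + |w' ω| * |f ω - f' ω| := by
                rw [abs_mul, abs_mul]

lemma abs_ratio_sub (hm : 0 < m) (hμ : ∀ ω θ, m ≤ μ ω θ) (hμ' : ∀ ω θ, m ≤ μ' ω θ)
    (hj : IsJoint μ) (hj' : IsJoint μ') (hd0 : 0 ≤ d)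
    (hd : ∀ ω θ, |μ ω θ - μ' ω θ| ≤ d) (ω : Ω) (θ : Θ) :
    |μ ω θ / margO μ ω - μ' ω θ / margO μ' ω|
      ≤ (1 + (Fintype.card Θ : ℝ)) * d / (m * m) := by
  have hp := margO_pos hm hμ hj ω
  have hp' := margO_pos hm hμ' hj' ω
  rw [div_sub_div _ _ (ne_of_gt hp) (ne_of_gt hp'), abs_div]
  have hnum : |μ ω θ * margO μ' ω - margO μ ω * μ' ω θ| ≤ (1 + (Fintype.card Θ : ℝ)) * d := by
    have he : μ ω θ * margO μ' ω - margO μ ω * μ' ω θ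
        = μ ω θ * (margO μ' ω - margO μ ω) + margO μ ω * (μ ω θ - μ' ω θ) := by ring
    have h1 : |margO μ' ω - margO μ ω| ≤ (Fintype.card Θ : ℝ) * d := by
      calc |margO μ' ω - margO μ ω| = |∑ θ', (μ' ω θ' - μ ω θ')| := by
            rw [Finset.sum_sub_distrib]; rfl
        _ ≤ ∑ θ' : Θ, |μ' ω θ' - μ ω θ'| := Finset.abs_sum_le_sum_abs _ _
        _ ≤ ∑ _θ' : Θ, d := Finset.sum_le_sum fun θ' _ => by
            rw [abs_sub_comm]; exact hd ω θ'
        _ = (Fintype.card Θ : ℝ) * d := by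
            rw [Finset.sum_const, Finset.card_univ, nsmul_eq_mul]
    have h2 := hd ω θ
    have h3 : 0 ≤ μ ω θ := hj.1 ω θ
    have h4 : μ ω θ ≤ 1 := le_trans (le_margO hj θ ω) (margO_le_one hj ω)
    have h5 : 0 ≤ margO μ ω := le_of_lt hp
    have h6 : margO μ ω ≤ 1 := margO_le_one hj ω
    rw [he]
    calc |μ ω θ * (margO μ' ω - margO μ ω) + margO μ ω * (μ ω θ - μ' ω θ)|
        ≤ |μ ω θ * (margO μ' ω - margO μ ω)| + |margO μ ω * (μ ω θ - μ' ω θ)| :=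
          abs_add_le _ _
      _ = μ ω θ * |margO μ' ω - margO μ ω| + margO μ ω * |μ ω θ - μ' ω θ| := by
          rw [abs_mul, abs_mul, abs_of_nonneg h3, abs_of_nonneg h5]
      _ ≤ 1 * ((Fintype.card Θ : ℝ) * d) + 1 * d := by
          have := abs_nonneg (margO μ' ω - margO μ ω)
          have := abs_nonneg (μ ω θ - μ' ω θ)
          nlinarith
      _ = (1 + (Fintype.card Θ : ℝ)) * d := by ring
  have hden : |margO μ ω * margO μ' ω| = margO μ ω * margO μ' ω :=
    abs_of_pos (mul_pos hp hp')
  rw [hden]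
  have hmm : m * m ≤ margO μ ω * margO μ' ω := by
    have := m_le_margO hμ hj ω
    have := m_le_margO hμ' hj' ω
    nlinarith
  exact div_le_div₀ (by positivity) hnum (by positivity) hmm

end Bounds
section Lip
variable {Θ Ω A : Type*} [Fintype Θ] [Fintype Ω] [Fintype A] [Nonempty A] [Nonempty Θ]
variable {m U d : ℝ} {μ μ' : Ω → Θ → ℝ} {u u' : Θ → Ω → A → ℝ}

lemma abs_Dq_sub (hm : 0 < m) (hμ : ∀ ω θ, m ≤ μ ω θ) (hμ' : ∀ ω θ, m ≤ μ' ω θ)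
    (hj : IsJoint μ) (hj' : IsJoint μ') (hd0 : 0 ≤ d) (hd : ∀ ω θ, |μ ω θ - μ' ω θ| ≤ d)
    {q : Ω → ℝ} (hq : ∀ ω, 0 ≤ q ω) (θ : Θ) (ω : Ω) :
    |Dq μ θ q ω - Dq μ' θ q ω| ≤ q ω * ((1 + (Fintype.card Θ : ℝ)) * d / (m * m)) := by
  have hr := abs_ratio_sub hm hμ hμ' hj hj' hd0 hd ω θ
  have he : Dq μ θ q ω - Dq μ' θ q ω
      = (μ ω θ / margO μ ω - μ' ω θ / margO μ' ω) * q ω := by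
    simp only [Dq]; ring
  rw [he, abs_mul, abs_of_nonneg (hq ω)]
  have h0 := abs_nonneg (μ ω θ / margO μ ω - μ' ω θ / margO μ' ω)
  have h1 := hq ω
  nlinarith

lemma abs_onesD_sub (hm : 0 < m) (hμ : ∀ ω θ, m ≤ μ ω θ) (hμ' : ∀ ω θ, m ≤ μ' ω θ)
    (hj : IsJoint μ) (hj' : IsJoint μ') (hd0 : 0 ≤ d) (hd : ∀ ω θ, |μ ω θ - μ' ω θ| ≤ d)
    {q : Ω → ℝ} (hq : IsDist q) (θ : Θ) :
    |onesD μ θ q - onesD μ' θ q| ≤ (1 + (Fintype.card Θ : ℝ)) * d / (m * m) := by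
  have he : onesD μ θ q - onesD μ' θ q = ∑ ω, (Dq μ θ q ω - Dq μ' θ q ω) := by
    rw [Finset.sum_sub_distrib]; rfl
  rw [he]
  calc |∑ ω, (Dq μ θ q ω - Dq μ' θ q ω)| ≤ ∑ ω, |Dq μ θ q ω - Dq μ' θ q ω| :=
        Finset.abs_sum_le_sum_abs _ _
    _ ≤ ∑ ω, q ω * ((1 + (Fintype.card Θ : ℝ)) * d / (m * m)) :=
        Finset.sum_le_sum fun ω _ => abs_Dq_sub hm hμ hμ' hj hj' hd0 hd hq.1 θ ω
    _ = (1 + (Fintype.card Θ : ℝ)) * d / (m * m) := by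
        rw [← Finset.sum_mul, hq.2, one_mul]

lemma abs_vfun_Dq_sub (hm : 0 < m) (hμ : ∀ ω θ, m ≤ μ ω θ) (hμ' : ∀ ω θ, m ≤ μ' ω θ)
    (hj : IsJoint μ) (hj' : IsJoint μ') (hd0 : 0 ≤ d) (hd : ∀ ω θ, |μ ω θ - μ' ω θ| ≤ d)
    (hU : ∀ θ ω a, |u θ ω a| ≤ U) (hud : ∀ θ ω a, |u θ ω a - u' θ ω a| ≤ d)
    {q : Ω → ℝ} (hq : IsDist q) (θ : Θ) :
    |vfun u θ (Dq μ θ q) - vfun u' θ (Dq μ' θ q)|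
      ≤ (1 + (Fintype.card Θ : ℝ)) * d / (m * m) * U + d := by
  refine abs_vfun_sub_le fun a => ?_
  calc |∑ ω, Dq μ θ q ω * u θ ω a - ∑ ω, Dq μ' θ q ω * u' θ ω a|
      ≤ ∑ ω, (|Dq μ θ q ω - Dq μ' θ q ω| * |u θ ω a|
          + |Dq μ' θ q ω| * |u θ ω a - u' θ ω a|) := abs_sum_mul_sub _ _ _ _
    _ ≤ ∑ ω, q ω * ((1 + (Fintype.card Θ : ℝ)) * d / (m * m) * U + d) :=
        Finset.sum_le_sum fun ω _ => by
          have h1 := abs_Dq_sub hm hμ hμ' hj hj' hd0 hd hq.1 θ ω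
          have h2 := hU θ ω a
          have h3 := hud θ ω a
          have h4 : |Dq μ' θ q ω| ≤ q ω := by
            rw [abs_of_nonneg (Dq_nonneg hm hμ' hj' hq.1 θ ω)]
            exact Dq_le hm hμ' hj' hq.1 θ ω
          have h5 := abs_nonneg (Dq μ θ q ω - Dq μ' θ q ω)
          have h6 := abs_nonneg (u θ ω a)
          have h7 := abs_nonneg (u θ ω a - u' θ ω a)
          have h8 := abs_nonneg (Dq μ' θ q ω)
          have h9 := hq.1 ω
          nlinarith
    _ = (1 + (Fintype.card Θ : ℝ)) * d / (m * m) * U + d := by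
        rw [← Finset.sum_mul, hq.2, one_mul]

lemma abs_vfun_prior_sub (hj : IsJoint μ) (hj' : IsJoint μ') (hd0 : 0 ≤ d)
    (hd : ∀ ω θ, |μ ω θ - μ' ω θ| ≤ d) (hU : ∀ θ ω a, |u θ ω a| ≤ U) (hU0 : 0 ≤ U)
    (hud : ∀ θ ω a, |u θ ω a - u' θ ω a| ≤ d) (θ : Θ) :
    |vfun u θ (fun ω => μ ω θ) - vfun u' θ (fun ω => μ' ω θ)|
      ≤ (Fintype.card Ω : ℝ) * d * U + d := by
  refine abs_vfun_sub_le fun a => ?_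
  calc |∑ ω, μ ω θ * u θ ω a - ∑ ω, μ' ω θ * u' θ ω a|
      ≤ ∑ ω, (|μ ω θ - μ' ω θ| * |u θ ω a| + |μ' ω θ| * |u θ ω a - u' θ ω a|) :=
        abs_sum_mul_sub _ _ _ _
    _ ≤ ∑ ω, (d * U + μ' ω θ * d) := Finset.sum_le_sum fun ω _ => by
        have h1 := hd ω θ
        have h2 := hU θ ω a
        have h3 := hud θ ω a
        have h4 := abs_nonneg (μ ω θ - μ' ω θ)
        have h5 := abs_nonneg (u θ ω a)
        have h6 := abs_nonneg (u θ ω a - u' θ ω a)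
        have h7 := hj'.1 ω θ
        rw [abs_of_nonneg h7]
        nlinarith
    _ = (Fintype.card Ω : ℝ) * (d * U) + (∑ ω, μ' ω θ) * d := by
        rw [Finset.sum_add_distrib, Finset.sum_const, Finset.card_univ, nsmul_eq_mul,
          Finset.sum_mul]
    _ ≤ (Fintype.card Ω : ℝ) * d * U + 1 * d := by
        have h8 := margT_le_one hj' θ
        have h9 : (0:ℝ) ≤ d := hd0
        have h10 : (0:ℝ) ≤ ∑ ω, μ' ω θ := Finset.sum_nonneg fun ω _ => hj'.1 ω θ
        have : (Fintype.card Ω : ℝ) * (d * U) = (Fintype.card Ω : ℝ) * d * U := by ring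
        rw [this]
        nlinarith
    _ = (Fintype.card Ω : ℝ) * d * U + d := by rw [one_mul]

end Lip

section PayBound
variable {Θ Ω A : Type*} [Fintype Θ] [Fintype Ω] [Fintype A] [Nonempty A] [Nonempty Θ]
variable {m U : ℝ} {μ : Ω → Θ → ℝ} {u : Θ → Ω → A → ℝ}

lemma pay_le (hm : 0 < m) (hμ : ∀ ω θ, m ≤ μ ω θ) (hj : IsJoint μ) (hU0 : 0 ≤ U)
    (hU : ∀ θ ω a, |u θ ω a| ≤ U) {x tt : (Ω → ℝ) →₀ ℝ} (hx : FeasRep (margO μ) x)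
    {θ : Θ} (hIR : vfun u θ (Dq μ θ (margO μ)) ≤ POutil u μ θ x tt) :
    fsum tt (fun q => onesD μ θ q) ≤ 2 * U := by
  rw [POutil_eq] at hIR
  have hV : |fsum x (fun q => vfun u θ (Dq μ θ q))| ≤ U := by
    have := abs_fsum_le hx.2.1 (fun q hq => abs_vfun_Dq_le hm hμ hj hU (hx.1 q hq) θ)
    rwa [hx.2.2.1, mul_one] at this
  have hprior : |vfun u θ (Dq μ θ (margO μ))| ≤ U := by
    rw [Dq_margO hm hμ hj θ]
    exact abs_vfun_prior_le hj hU0 hU θ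
  have h1 := (abs_le.mp hV).2
  have h2 := (abs_le.mp hprior).1
  linarith

lemma tt_total_le (hm : 0 < m) (hμ : ∀ ω θ, m ≤ μ ω θ) (hj : IsJoint μ) (hU0 : 0 ≤ U)
    (hU : ∀ θ ω a, |u θ ω a| ≤ U) {x tt : (Ω → ℝ) →₀ ℝ} (hx : FeasRep (margO μ) x)
    (hsupp : tt.support ⊆ x.support) (htt : ∀ q, 0 ≤ tt q) {θ : Θ}
    (hIR : vfun u θ (Dq μ θ (margO μ)) ≤ POutil u μ θ x tt) :
    ∑ q ∈ tt.support, tt q ≤ 2 * U / m := by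
  have h := mul_total_le_fsum htt
    (fun q hq => m_le_onesD hm hμ hj (hx.1 q (hsupp hq)) θ)
  have h2 := pay_le hm hμ hj hU0 hU hx hIR
  rw [le_div_iff₀ hm]
  calc (∑ q ∈ tt.support, tt q) * m = m * ∑ q ∈ tt.support, tt q := mul_comm _ _
    _ ≤ fsum tt (fun q => onesD μ θ q) := h
    _ ≤ 2 * U := h2

lemma Rp_set_bddAbove [Nonempty Ω] (hj : IsJoint μ) (hpos : ∀ ω θ, 0 < μ ω θ) :
    BddAbove {r | ∃ x tt, POvalid u μ x tt ∧ (∀ θ q, 0 ≤ tt θ q) ∧ r = POrev μ tt} := by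
  classical
  obtain ⟨pm, -, hpm⟩ := Finset.exists_min_image (Finset.univ : Finset (Ω × Θ))
    (fun p => μ p.1 p.2) Finset.univ_nonempty
  set m := μ pm.1 pm.2 with hmdef
  have hm : 0 < m := hpos pm.1 pm.2
  have hμm : ∀ ω θ, m ≤ μ ω θ := fun ω θ => hpm (ω, θ) (Finset.mem_univ _)
  obtain ⟨U, hUmem⟩ := (Set.finite_range fun p : Θ × Ω × A =>
    |u p.1 p.2.1 p.2.2|).bddAbove
  have hU : ∀ θ ω a, |u θ ω a| ≤ U := fun θ ω a => hUmem ⟨(θ, ω, a), rfl⟩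
  have hU0 : 0 ≤ U := by
    obtain ⟨θ0⟩ := (inferInstance : Nonempty Θ)
    obtain ⟨ω0⟩ := (inferInstance : Nonempty Ω)
    obtain ⟨a0⟩ := (inferInstance : Nonempty A)
    exact le_trans (abs_nonneg _) (hU θ0 ω0 a0)
  refine ⟨(Fintype.card Θ : ℝ) * (2 * U), fun r hr => ?_⟩
  obtain ⟨x, tt, hval, httn, rfl⟩ := hr
  rw [POrev_eq]
  calc ∑ θ, fsum (tt θ) (fun q => onesD μ θ q) ≤ ∑ _θ : Θ, 2 * U :=
      Finset.sum_le_sum fun θ _ =>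
        pay_le hm hμm hj hU0 hU (hval.1 θ) (hval.2.2.1 θ)
    _ = (Fintype.card Θ : ℝ) * (2 * U) := by
        rw [Finset.sum_const, Finset.card_univ, nsmul_eq_mul]

end PayBound
section Transfer
variable {Θ Ω A : Type*} [Fintype Θ] [Fintype Ω] [Fintype A] [Nonempty A] [Nonempty Θ]

lemma abs_mix_le {lam D F G b1 b2 : ℝ} (hl0 : 0 ≤ lam) (hl1 : lam ≤ 1)
    (hD : |D| ≤ b1) (hF : |F| ≤ b2) (hG : |G| ≤ b2) :
    |lam * D + (lam - 1) * F + (1 - lam) * G| ≤ b1 + 2 * (1 - lam) * b2 := by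
  have h1 := abs_add_three (lam * D) ((lam - 1) * F) ((1 - lam) * G)
  rw [abs_mul, abs_mul, abs_mul, abs_of_nonneg hl0,
    abs_of_nonpos (by linarith : lam - 1 ≤ 0), abs_of_nonneg (by linarith : (0:ℝ) ≤ 1 - lam)]
    at h1
  have hb1 : 0 ≤ b1 := le_trans (abs_nonneg D) hD
  have hb2 : 0 ≤ b2 := le_trans (abs_nonneg F) hF
  have k1 : lam * |D| ≤ lam * b1 := mul_le_mul_of_nonneg_left hD hl0
  have k2 : -(lam - 1) * |F| ≤ (1 - lam) * b2 := by
    have := mul_le_mul_of_nonneg_left hF (by linarith : (0:ℝ) ≤ 1 - lam)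
    nlinarith [abs_nonneg F]
  have k3 : (1 - lam) * |G| ≤ (1 - lam) * b2 :=
    mul_le_mul_of_nonneg_left hG (by linarith : (0:ℝ) ≤ 1 - lam)
  have k4 : lam * b1 ≤ b1 := by nlinarith
  linarith

lemma FeasRep_mix {p p' : Ω → ℝ} {x : (Ω → ℝ) →₀ ℝ} (hx : FeasRep p x)
    {lam : ℝ} (hl0 : 0 < lam) (hl1 : lam < 1) {r0 : Ω → ℝ}
    (hr : IsDist r0) (hmix : ∀ ω, lam * p ω + (1 - lam) * r0 ω = p' ω) :
    FeasRep p' (lam • x + Finsupp.single r0 (1 - lam))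
      ∧ x.support ⊆ (lam • x + Finsupp.single r0 (1 - lam)).support := by
  classical
  set y := lam • x + Finsupp.single r0 (1 - lam) with hy
  have happ : ∀ q, y q = lam * x q + (Finsupp.single r0 (1 - lam)) q := fun q => by
    rw [hy, Finsupp.add_apply, Finsupp.smul_apply, smul_eq_mul]
  have hsgl : ∀ q, 0 ≤ (Finsupp.single r0 (1 - lam)) q := fun q => by
    rw [Finsupp.single_apply]; split
    · linarith
    · exact le_refl 0
  have hynn : ∀ q, 0 ≤ y q := fun q => by
    rw [happ q]
    have h1 := hx.2.1 q
    have h2 := hsgl q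
    nlinarith
  have hsub : y.support ⊆ x.support ∪ {r0} := by
    refine Finset.Subset.trans Finsupp.support_add ?_
    exact Finset.union_subset_union Finsupp.support_smul Finsupp.support_single_subset
  have hxy : x.support ⊆ y.support := by
    intro q hq
    rw [Finsupp.mem_support_iff] at hq ⊢
    have hxq : 0 < x q := lt_of_le_of_ne (hx.2.1 q) (Ne.symm hq)
    have := hsgl q
    rw [happ q]
    nlinarith
  have htot : ∀ (z : (Ω → ℝ) →₀ ℝ), ∑ q ∈ z.support, z q = fsum z (fun _ => 1) := by
    intro z; rw [fsum]; exact Finset.sum_congr rfl fun q _ => (mul_one _).symm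
  have hev : ∀ (z : (Ω → ℝ) →₀ ℝ) (ω : Ω),
      ∑ q ∈ z.support, z q * q ω = fsum z (fun q => q ω) := fun z ω => rfl
  refine ⟨⟨?_, hynn, ?_, ?_⟩, hxy⟩
  · intro q hq
    rcases Finset.mem_union.mp (hsub hq) with h | h
    · exact hx.1 q h
    · rw [Finset.mem_singleton] at h; subst h; exact hr
  · rw [htot y, hy, fsum_add, fsum_smul, fsum_single]
    rw [← htot x, hx.2.2.1]
    ring
  · intro ω
    rw [hev y ω, hy, fsum_add, fsum_smul, fsum_single]
    rw [← hev x ω, hx.2.2.2 ω, ← hmix ω]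

/-- Collected error constant (three grouped perturbation bounds). -/
def Econst (T Oc m U d : ℝ) : ℝ :=
  ((1 + T) * d / (m * m) * U + d + 2 * (T * d / m) * U)
    + ((1 + T) * d / (m * m) * (2 * U / m) + 2 * (T * d / m) * (2 * U / m))
    + (Oc * d * U + d)

lemma Econst_pieces {T Oc m U d : ℝ} (hT : 0 ≤ T) (hOc : 0 ≤ Oc) (hm : 0 < m)
    (hU : 0 ≤ U) (hd : 0 ≤ d) :
    0 ≤ (1 + T) * d / (m * m) * U + d + 2 * (T * d / m) * U
    ∧ 0 ≤ (1 + T) * d / (m * m) * (2 * U / m) + 2 * (T * d / m) * (2 * U / m)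
    ∧ 0 ≤ Oc * d * U + d := by
  have a1 : 0 ≤ (1 + T) * d / (m * m) :=
    div_nonneg (mul_nonneg (by linarith) hd) (le_of_lt (mul_pos hm hm))
  have a2 : 0 ≤ T * d / m := div_nonneg (mul_nonneg hT hd) (le_of_lt hm)
  have a3 : 0 ≤ 2 * U / m := div_nonneg (by linarith) (le_of_lt hm)
  refine ⟨?_, ?_, ?_⟩
  · have := mul_nonneg a1 hU
    have := mul_nonneg a2 hU
    linarith
  · have := mul_nonneg a1 a3
    have := mul_nonneg a2 a3
    linarith
  · have := mul_nonneg (mul_nonneg hOc hd) hU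
    linarith

set_option maxHeartbeats 2000000 in
lemma transfer [Nonempty Ω]
    {u u' : Θ → Ω → A → ℝ} {μ μ' : Ω → Θ → ℝ} {m U d η : ℝ}
    (hj : IsJoint μ) (hj' : IsJoint μ')
    (hm : 0 < m) (hU0 : 0 ≤ U)
    (hμm : ∀ ω θ, m ≤ μ ω θ) (hμ'm : ∀ ω θ, m ≤ μ' ω θ)
    (hU : ∀ θ ω a, |u θ ω a| ≤ U) (hU' : ∀ θ ω a, |u' θ ω a| ≤ U)
    (hud : ∀ θ ω a, |u θ ω a - u' θ ω a| ≤ d) (hμd : ∀ ω θ, |μ ω θ - μ' ω θ| ≤ d)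
    (hd0 : 0 < d) (hdm : (Fintype.card Θ : ℝ) * d / m ≤ 1/2)
    (hη0 : 0 < η) (hη1 : η ≤ 1/2)
    {x : Θ → ((Ω → ℝ) →₀ ℝ)} {tt : Θ → ((Ω → ℝ) →₀ ℝ)}
    (hval : POvalid u μ x tt) (httn : ∀ θ q, 0 ≤ tt θ q) :
    ∃ x' tt', POvalid u' μ' x' tt' ∧ (∀ θ q, 0 ≤ tt' θ q) ∧
      POrev μ tt - (Fintype.card Θ : ℝ) * (η * (2 * U / m)
          + Econst (Fintype.card Θ : ℝ) (Fintype.card Ω : ℝ) m U d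
          + 4 * Econst (Fintype.card Θ : ℝ) (Fintype.card Ω : ℝ) m U d / η)
        ≤ POrev μ' tt' := by
  classical
  obtain ⟨hfeas, hsupp, hIR, hIC⟩ := hval
  set T : ℝ := (Fintype.card Θ : ℝ) with hTdef
  have hT1 : (1:ℝ) ≤ T := by
    rw [hTdef]; exact_mod_cast Fintype.card_pos
  have hT0 : (0:ℝ) < T := lt_of_lt_of_le one_pos hT1
  have hOc0 : (0:ℝ) ≤ (Fintype.card Ω : ℝ) := Nat.cast_nonneg _
  set E : ℝ := Econst T (Fintype.card Ω : ℝ) m U d with hEdef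
  obtain ⟨hp1, hp2, hp3⟩ :=
    Econst_pieces (Oc := (Fintype.card Ω : ℝ)) (le_of_lt hT0) hOc0 hm hU0 (le_of_lt hd0)
  have hEsplit : E = ((1 + T) * d / (m * m) * U + d + 2 * (T * d / m) * U)
      + ((1 + T) * d / (m * m) * (2 * U / m) + 2 * (T * d / m) * (2 * U / m))
      + ((Fintype.card Ω : ℝ) * d * U + d) := by rw [hEdef, Econst]
  have hE0 : 0 ≤ E := by rw [hEsplit]; linarith
  set B : ℝ := 2 * U / m with hBdef
  have hB0 : 0 ≤ B := by rw [hBdef]; positivity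
  set p := margO μ with hpdef
  set p' := margO μ' with hp'def
  have hpd : IsDist p := margO_isDist hj
  have hp'd : IsDist p' := margO_isDist hj'
  set τ : ℝ := T * d / m with hτdef
  have hτ0 : 0 < τ := by rw [hτdef]; positivity
  have hτ2 : τ ≤ 1/2 := hdm
  set lam : ℝ := 1 - τ with hlamdef
  have hlam0 : 0 < lam := by rw [hlamdef]; linarith
  have hlam1 : lam < 1 := by rw [hlamdef]; linarith
  have h1lam : 1 - lam = τ := by rw [hlamdef]; ring
  have hτm : τ * m = T * d := by rw [hτdef]; field_simp
  have hplow : ∀ ω, m ≤ p ω := m_le_margO hμm hj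
  have hpp' : ∀ ω, |p ω - p' ω| ≤ T * d := by
    intro ω
    calc |p ω - p' ω| = |∑ θ, (μ ω θ - μ' ω θ)| := by
          rw [Finset.sum_sub_distrib]; rfl
      _ ≤ ∑ θ, |μ ω θ - μ' ω θ| := Finset.abs_sum_le_sum_abs _ _
      _ ≤ ∑ _θ : Θ, d := Finset.sum_le_sum fun θ _ => hμd ω θ
      _ = T * d := by rw [Finset.sum_const, Finset.card_univ, nsmul_eq_mul, hTdef]
  set r0 : Ω → ℝ := fun ω => (p' ω - lam * p ω) / (1 - lam) with hr0def
  have h1l : (0:ℝ) < 1 - lam := by linarith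
  have h1lne : (1:ℝ) - lam ≠ 0 := ne_of_gt h1l
  have hnum : ∀ ω, 0 ≤ p' ω - lam * p ω := by
    intro ω
    have h1 := abs_le.mp (hpp' ω)
    have h2 := hplow ω
    have hτp : T * d ≤ τ * p ω := by
      nlinarith [hτm, mul_nonneg (le_of_lt hτ0) (sub_nonneg.mpr h2)]
    have hlame : lam = 1 - τ := hlamdef
    rw [hlame]
    linarith [h1.2]
  have hr0nn : ∀ ω, 0 ≤ r0 ω := fun ω => div_nonneg (hnum ω) (le_of_lt h1l)
  have hr0d : IsDist r0 := by
    refine ⟨hr0nn, ?_⟩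
    have h1 : ∑ ω, (p' ω - lam * p ω) = 1 - lam := by
      rw [Finset.sum_sub_distrib, ← Finset.mul_sum, hp'd.2, hpd.2]; ring
    show ∑ ω, (p' ω - lam * p ω) / (1 - lam) = 1
    rw [← Finset.sum_div, h1, div_self h1lne]
  have hmix : ∀ ω, lam * p ω + (1 - lam) * r0 ω = p' ω := by
    intro ω
    have hXc : (1 - lam) * ((p' ω - lam * p ω) / (1 - lam)) = p' ω - lam * p ω := by
      field_simp
    show lam * p ω + (1 - lam) * ((p' ω - lam * p ω) / (1 - lam)) = p' ω
    rw [hXc]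
    ring
  have hymix := fun θ'' => FeasRep_mix (hfeas θ'') hlam0 hlam1 hr0d hmix
  set y : Θ → ((Ω → ℝ) →₀ ℝ) :=
    fun θ'' => lam • x θ'' + Finsupp.single r0 (1 - lam) with hydef
  set c0 : ℝ := (1 - η) * lam with hc0def
  have hc00 : 0 ≤ c0 := by rw [hc0def]; nlinarith
  set Vo : Θ → Θ → ℝ :=
    fun θ θ'' => fsum (x θ'') (fun q => vfun u θ (Dq μ θ q)) with hVodef
  set Vc : Θ → Θ → ℝ :=
    fun θ θ'' => fsum (y θ'') (fun q => vfun u' θ (Dq μ' θ q)) with hVcdef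
  set Po : Θ → Θ → ℝ :=
    fun θ θ'' => fsum (tt θ'') (fun q => onesD μ θ q) with hPodef
  set Pc : Θ → Θ → ℝ :=
    fun θ θ'' => lam * fsum (tt θ'') (fun q => onesD μ' θ q) with hPcdef
  set W : Θ → Θ → ℝ := fun θ θ'' => POutil u' μ' θ (y θ'') (c0 • tt θ'') with hWdef
  set W0 : Θ → ℝ := fun θ => vfun u' θ (Dq μ' θ p') with hW0def
  have hWd : ∀ θ θ'', W θ θ'' = Vc θ θ'' - (1 - η) * Pc θ θ'' := by
    intro θ θ''
    simp only [hWdef, hVcdef, hPcdef]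
    rw [POutil_eq, fsum_smul, hc0def]
    ring
  have httot : ∀ θ'', ∑ q ∈ (tt θ'').support, tt θ'' q ≤ B := by
    intro θ''
    rw [hBdef]
    exact tt_total_le hm hμm hj hU0 hU (hfeas θ'') (hsupp θ'') (httn θ'') (hIR θ'')
  have httot0 : ∀ θ'', 0 ≤ ∑ q ∈ (tt θ'').support, tt θ'' q :=
    fun θ'' => Finset.sum_nonneg fun q _ => httn θ'' q
  have hdist : ∀ θ'' q, q ∈ (tt θ'').support → IsDist q :=
    fun θ'' q hq => (hfeas θ'').1 q ((hsupp θ'') hq)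
  have hPo0 : ∀ θ θ'', 0 ≤ Po θ θ'' := by
    intro θ θ''
    simp only [hPodef]
    exact fsum_nonneg (httn θ'') fun q hq =>
      onesD_nonneg hm hμm hj (hdist θ'' q hq).1 θ
  have hPc0 : ∀ θ θ'', 0 ≤ Pc θ θ'' := by
    intro θ θ''
    simp only [hPcdef]
    have := fsum_nonneg (g := fun q => onesD μ' θ q) (httn θ'') fun q hq =>
      onesD_nonneg hm hμ'm hj' (hdist θ'' q hq).1 θ
    nlinarith
  have hPcB : ∀ θ θ'', Pc θ θ'' ≤ B := by
    intro θ θ''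
    simp only [hPcdef]
    have h1 : fsum (tt θ'') (fun q => onesD μ' θ q)
        ≤ 1 * ∑ q ∈ (tt θ'').support, tt θ'' q :=
      fsum_le_mul_total (httn θ'') fun q hq => onesD_le_one hm hμ'm hj' (hdist θ'' q hq) θ
    have h2 := httot θ''
    have h3 := httot0 θ''
    have h4 : (0:ℝ) ≤ fsum (tt θ'') (fun q => onesD μ' θ q) :=
      fsum_nonneg (httn θ'') fun q hq =>
        onesD_nonneg hm hμ'm hj' (hdist θ'' q hq).1 θ
    nlinarith
  -- perturbation of values
  have hVd : ∀ θ θ'', |Vc θ θ'' - Vo θ θ''| ≤ E := by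
    intro θ θ''
    have hD : |fsum (x θ'') (fun q => vfun u' θ (Dq μ' θ q))
        - fsum (x θ'') (fun q => vfun u θ (Dq μ θ q))|
          ≤ (1 + T) * d / (m * m) * U + d := by
      have h := abs_fsum_sub_fsum_le (hfeas θ'').2.1
        (g := fun q => vfun u' θ (Dq μ' θ q)) (h := fun q => vfun u θ (Dq μ θ q))
        (b := (1 + T) * d / (m * m) * U + d)
        (fun q hq => by
          rw [abs_sub_comm]
          exact abs_vfun_Dq_sub hm hμm hμ'm hj hj' (le_of_lt hd0) hμd hU hud
            ((hfeas θ'').1 q hq) θ)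
      rwa [(hfeas θ'').2.2.1, mul_one] at h
    have hF : |fsum (x θ'') (fun q => vfun u θ (Dq μ θ q))| ≤ U := by
      have h := abs_fsum_le (hfeas θ'').2.1
        (fun q hq => abs_vfun_Dq_le hm hμm hj hU ((hfeas θ'').1 q hq) θ)
      rwa [(hfeas θ'').2.2.1, mul_one] at h
    have hG : |vfun u' θ (Dq μ' θ r0)| ≤ U := abs_vfun_Dq_le hm hμ'm hj' hU' hr0d θ
    have heq : Vc θ θ'' - Vo θ θ''
        = lam * (fsum (x θ'') (fun q => vfun u' θ (Dq μ' θ q))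
            - fsum (x θ'') (fun q => vfun u θ (Dq μ θ q)))
          + (lam - 1) * fsum (x θ'') (fun q => vfun u θ (Dq μ θ q))
          + (1 - lam) * vfun u' θ (Dq μ' θ r0) := by
      simp only [hVcdef, hVodef, hydef]
      rw [fsum_add, fsum_smul, fsum_single]
      ring
    rw [heq]
    have hb := abs_mix_le (le_of_lt hlam0) (le_of_lt hlam1) hD hF hG
    refine le_trans hb ?_
    rw [hEsplit, h1lam, hτdef]
    linarith
  -- perturbation of payments
  have hPd : ∀ θ θ'', |Pc θ θ'' - Po θ θ''| ≤ E := by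
    intro θ θ''
    have hD : |fsum (tt θ'') (fun q => onesD μ' θ q)
        - fsum (tt θ'') (fun q => onesD μ θ q)|
          ≤ (1 + T) * d / (m * m) * (2 * U / m) := by
      have h := abs_fsum_sub_fsum_le (httn θ'')
        (g := fun q => onesD μ' θ q) (h := fun q => onesD μ θ q)
        (b := (1 + T) * d / (m * m))
        (fun q hq => by
          rw [abs_sub_comm]
          exact abs_onesD_sub hm hμm hμ'm hj hj' (le_of_lt hd0) hμd (hdist θ'' q hq) θ)
      have a1 : 0 ≤ (1 + T) * d / (m * m) :=
        div_nonneg (mul_nonneg (by linarith) (le_of_lt hd0)) (le_of_lt (mul_pos hm hm))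
      have h2 := httot θ''
      calc |fsum (tt θ'') (fun q => onesD μ' θ q) - fsum (tt θ'') (fun q => onesD μ θ q)|
          ≤ (1 + T) * d / (m * m) * ∑ q ∈ (tt θ'').support, tt θ'' q := h
        _ ≤ (1 + T) * d / (m * m) * B := mul_le_mul_of_nonneg_left h2 a1
        _ = (1 + T) * d / (m * m) * (2 * U / m) := by rw [hBdef]
    have hF : |fsum (tt θ'') (fun q => onesD μ θ q)| ≤ B := by
      have h := abs_fsum_le (httn θ'') (b := 1)
        (fun q hq => by
          rw [abs_of_nonneg (onesD_nonneg hm hμm hj (hdist θ'' q hq).1 θ)]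
          exact onesD_le_one hm hμm hj (hdist θ'' q hq) θ)
      rw [one_mul] at h
      exact le_trans h (httot θ'')
    have hG : |(0:ℝ)| ≤ B := by rw [abs_zero]; exact hB0
    have heq : Pc θ θ'' - Po θ θ''
        = lam * (fsum (tt θ'') (fun q => onesD μ' θ q)
            - fsum (tt θ'') (fun q => onesD μ θ q))
          + (lam - 1) * fsum (tt θ'') (fun q => onesD μ θ q)
          + (1 - lam) * 0 := by
      simp only [hPcdef, hPodef]
      ring
    rw [heq]
    have hb := abs_mix_le (le_of_lt hlam0) (le_of_lt hlam1) hD hF hG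
    refine le_trans hb ?_
    rw [hEsplit, h1lam, hτdef, hBdef]
    linarith
  -- perturbation of the prior value
  have hprE : ∀ θ, |W0 θ - vfun u θ (Dq μ θ p)| ≤ E := by
    intro θ
    simp only [hW0def]
    rw [hp'def, hpdef, Dq_margO hm hμ'm hj' θ, Dq_margO hm hμm hj θ]
    have h := abs_vfun_prior_sub (u := u) (u' := u') hj hj' (le_of_lt hd0) hμd hU hU0 hud θ
    rw [abs_sub_comm] at h
    refine le_trans h ?_
    rw [hEsplit]
    linarith
  -- choose optimal contracts
  have hex : ∀ θ : Θ, ∃ θ'', ∀ θ''', W θ θ''' ≤ W θ θ'' := by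
    intro θ
    obtain ⟨θ'', -, hmax⟩ :=
      Finset.exists_max_image Finset.univ (W θ) Finset.univ_nonempty
    exact ⟨θ'', fun θ''' => hmax θ''' (Finset.mem_univ _)⟩
  choose θs hθs using hex
  set keep : Θ → Prop := fun θ => W0 θ ≤ W θ (θs θ) with hkeepdef
  set x' : Θ → ((Ω → ℝ) →₀ ℝ) :=
    fun θ => if keep θ then y (θs θ) else Finsupp.single p' 1 with hx'def
  set tt' : Θ → ((Ω → ℝ) →₀ ℝ) :=
    fun θ => if keep θ then c0 • tt (θs θ) else 0 with htt'def
  have hPOnull : ∀ θ, POutil u' μ' θ (Finsupp.single p' 1) 0 = W0 θ := by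
    intro θ
    rw [POutil_eq, fsum_single, fsum_zero]
    simp only [hW0def]
    ring
  have hdev : ∀ θ θ', POutil u' μ' θ (x' θ') (tt' θ')
      = if keep θ' then W θ (θs θ') else W0 θ := by
    intro θ θ'
    by_cases h : keep θ'
    · simp only [hx'def, htt'def, hWdef, if_pos h]
    · simp only [hx'def, htt'def, if_neg h]
      exact hPOnull θ
  refine ⟨x', tt', ⟨?_, ?_, ?_, ?_⟩, ?_, ?_⟩
  · -- feasibility
    intro θ
    simp only [hx'def]
    by_cases h : keep θ
    · rw [if_pos h]; exact (hymix (θs θ)).1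
    · rw [if_neg h]; exact FeasRep_single hp'd
  · -- supports
    intro θ
    simp only [hx'def, htt'def]
    by_cases h : keep θ
    · rw [if_pos h, if_pos h]
      exact (Finsupp.support_smul).trans ((hsupp (θs θ)).trans ((hymix (θs θ)).2))
    · rw [if_neg h, if_neg h]
      simp
  · -- IR
    intro θ
    rw [hdev θ θ]
    have hbase : vfun u' θ (Dq μ' θ (margO μ')) = W0 θ := by
      simp only [hW0def, hp'def]
    rw [hbase]
    by_cases h : keep θ
    · rw [if_pos h]
      simpa only [hkeepdef] using h
    · rw [if_neg h]
  · -- IC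
    intro θ θ' _
    rw [hdev θ θ', hdev θ θ]
    have hk : ∀ θ'', W θ θ'' ≤ W θ (θs θ) := hθs θ
    by_cases h : keep θ
    · rw [if_pos h]
      by_cases h' : keep θ'
      · rw [if_pos h']; exact hk (θs θ')
      · rw [if_neg h']
        simpa only [hkeepdef] using h
    · rw [if_neg h]
      have hlt : W θ (θs θ) < W0 θ := by
        have := not_le.mp (by simpa only [hkeepdef] using h)
        exact this
      by_cases h' : keep θ'
      · rw [if_pos h']
        exact le_of_lt (lt_of_le_of_lt (hk (θs θ')) hlt)
      · rw [if_neg h']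
  · -- nonneg payments
    intro θ q
    simp only [htt'def]
    by_cases h : keep θ
    · rw [if_pos h, Finsupp.smul_apply, smul_eq_mul]
      exact mul_nonneg hc00 (httn (θs θ) q)
    · rw [if_neg h]
      rfl
  · -- revenue
    have hrevPo : POrev μ tt = ∑ θ, Po θ θ := by
      rw [POrev_eq]
    have hrev' : POrev μ' tt' = ∑ θ, (if keep θ then (1 - η) * Pc θ (θs θ) else 0) := by
      rw [POrev_eq]
      refine Finset.sum_congr rfl fun θ _ => ?_
      by_cases h : keep θ
      · simp only [htt'def, if_pos h]
        rw [fsum_smul, hc0def]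
        simp only [hPcdef]
        ring
      · simp only [htt'def, if_neg h]
        exact fsum_zero _
    have hηne : η ≠ 0 := ne_of_gt hη0
    have hK4 : η * (4 * E / η) = 4 * E := by field_simp
    have hK3 : η * (3 * E / η) = 3 * E := by field_simp
    have hEη : 0 ≤ E / η := div_nonneg hE0 (le_of_lt hη0)
    have hηB : 0 ≤ η * B := mul_nonneg (le_of_lt hη0) hB0
    have hper : ∀ θ, Po θ θ - (η * B + E + 4 * E / η)
        ≤ (if keep θ then (1 - η) * Pc θ (θs θ) else 0) := by
      intro θ
      have hICo : Vo θ (θs θ) - Po θ (θs θ) ≤ Vo θ θ - Po θ θ := by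
        rcases eq_or_ne (θs θ) θ with he | hne
        · rw [he]
        · have h := hIC θ (θs θ) hne
          rw [POutil_eq, POutil_eq] at h
          simpa only [hVodef, hPodef] using h
      have hIRo : vfun u θ (Dq μ θ p) ≤ Vo θ θ - Po θ θ := by
        have h := hIR θ
        rw [POutil_eq] at h
        simpa only [hVodef, hPodef] using h
      have hWt := hWd θ θ
      have hWs := hWd θ (θs θ)
      have hmax := hθs θ θ
      have hV1 := abs_le.mp (hVd θ (θs θ))
      have hV2 := abs_le.mp (hVd θ θ)
      have hP1 := abs_le.mp (hPd θ (θs θ))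
      have hP2 := abs_le.mp (hPd θ θ)
      have hpr := abs_le.mp (hprE θ)
      by_cases h : keep θ
      · rw [if_pos h]
        have step1 : η * Pc θ θ - 4 * E ≤ η * Pc θ (θs θ) := by
          linarith [hmax, hWt, hWs, hICo, hV1.1, hV1.2, hV2.1, hV2.2,
            hP1.1, hP1.2, hP2.1, hP2.2]
        have step2 : Pc θ θ - 4 * E / η ≤ Pc θ (θs θ) := by
          have h' : η * (Pc θ θ - 4 * E / η) ≤ η * Pc θ (θs θ) := by
            rw [mul_sub, hK4]
            linarith
          exact le_of_mul_le_mul_left h' hη0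
        have hb1B : η * Pc θ (θs θ) ≤ η * B :=
          mul_le_mul_of_nonneg_left (hPcB θ (θs θ)) (le_of_lt hη0)
        linarith [hP2.1, step2, hb1B]
      · rw [if_neg h]
        have hlt : W θ (θs θ) < W0 θ := not_le.mp (by simpa only [hkeepdef] using h)
        have step1 : η * Pc θ θ ≤ 3 * E := by
          linarith [hmax, hlt, hWt, hpr.2, hIRo, hV2.2, hP2.1]
        have step2 : Pc θ θ ≤ 3 * E / η := by
          have h' : η * Pc θ θ ≤ η * (3 * E / η) := by
            rw [hK3]
            linarith
          exact le_of_mul_le_mul_left h' hη0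
        have h34 : 3 * E / η ≤ 4 * E / η := by
          have h35 : 3 * (E / η) ≤ 4 * (E / η) := by linarith [hEη]
          calc 3 * E / η = 3 * (E / η) := by ring
            _ ≤ 4 * (E / η) := h35
            _ = 4 * E / η := by ring
        linarith [hP2.1, step2, h34, hηB]
    calc POrev μ tt - T * (η * B + E + 4 * E / η)
        = ∑ θ, (Po θ θ - (η * B + E + 4 * E / η)) := by
          rw [Finset.sum_sub_distrib, ← hrevPo, Finset.sum_const, Finset.card_univ,
            nsmul_eq_mul, ← hTdef]
      _ ≤ ∑ θ, (if keep θ then (1 - η) * Pc θ (θs θ) else 0) :=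
          Finset.sum_le_sum fun θ _ => hper θ
      _ = POrev μ' tt' := hrev'.symm

end Transfer
section Main
variable {Θ Ω A : Type*} [Fintype Θ] [Fintype Ω] [Fintype A] [Nonempty A]

lemma Econst_linear (T Oc m U d : ℝ) : Econst T Oc m U d = d * Econst T Oc m U 1 := by
  rw [Econst, Econst]; ring

set_option maxHeartbeats 1000000 in
theorem Rp_continuous_aux [Nonempty Θ] [Nonempty Ω] :
    ContinuousOn (fun p : (Θ → Ω → A → ℝ) × (Ω → Θ → ℝ) => Rp p.1 p.2)
      {p | IsJoint p.2 ∧ ∀ ω θ, 0 < p.2 ω θ} := by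
  classical
  rw [Metric.continuousOn_iff]
  intro c₀ hc₀ ε hε
  -- pointwise component distance bounds
  have hcompU : ∀ (c c' : (Θ → Ω → A → ℝ) × (Ω → Θ → ℝ)) θ ω a,
      |c.1 θ ω a - c'.1 θ ω a| ≤ dist c c' := by
    intro c c' θ ω a
    rw [← Real.dist_eq]
    calc dist (c.1 θ ω a) (c'.1 θ ω a) ≤ dist (c.1 θ ω) (c'.1 θ ω) :=
          dist_le_pi_dist _ _ a
      _ ≤ dist (c.1 θ) (c'.1 θ) := dist_le_pi_dist _ _ ω
      _ ≤ dist c.1 c'.1 := dist_le_pi_dist _ _ θ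
      _ ≤ dist c c' := by rw [Prod.dist_eq]; exact le_max_left _ _
  have hcompM : ∀ (c c' : (Θ → Ω → A → ℝ) × (Ω → Θ → ℝ)) ω θ,
      |c.2 ω θ - c'.2 ω θ| ≤ dist c c' := by
    intro c c' ω θ
    rw [← Real.dist_eq]
    calc dist (c.2 ω θ) (c'.2 ω θ) ≤ dist (c.2 ω) (c'.2 ω) := dist_le_pi_dist _ _ θ
      _ ≤ dist c.2 c'.2 := dist_le_pi_dist _ _ ω
      _ ≤ dist c c' := by rw [Prod.dist_eq]; exact le_max_right _ _
  -- constants at c₀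
  obtain ⟨pm, -, hpm⟩ := Finset.exists_min_image (Finset.univ : Finset (Ω × Θ))
    (fun pr => c₀.2 pr.1 pr.2) Finset.univ_nonempty
  have hm0 : 0 < c₀.2 pm.1 pm.2 := hc₀.2 pm.1 pm.2
  have hlow : ∀ ω θ, c₀.2 pm.1 pm.2 ≤ c₀.2 ω θ := fun ω θ => hpm (ω, θ) (Finset.mem_univ _)
  obtain ⟨U0, hU0mem⟩ := (Set.finite_range fun pr : Θ × Ω × A =>
    |c₀.1 pr.1 pr.2.1 pr.2.2|).bddAbove
  have hU0 : ∀ θ ω a, |c₀.1 θ ω a| ≤ U0 := fun θ ω a => hU0mem ⟨(θ, ω, a), rfl⟩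
  have hU00 : 0 ≤ U0 := by
    obtain ⟨θ0⟩ := (inferInstance : Nonempty Θ)
    obtain ⟨ω0⟩ := (inferInstance : Nonempty Ω)
    obtain ⟨a0⟩ := (inferInstance : Nonempty A)
    exact le_trans (abs_nonneg _) (hU0 θ0 ω0 a0)
  set m : ℝ := c₀.2 pm.1 pm.2 / 2 with hmdef
  have hm : 0 < m := by rw [hmdef]; linarith
  set U : ℝ := U0 + 1 with hUdef
  have hU0' : 0 ≤ U := by rw [hUdef]; linarith
  have hT1 : (1:ℝ) ≤ (Fintype.card Θ : ℝ) := by exact_mod_cast Fintype.card_pos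
  have hT0 : (0:ℝ) < (Fintype.card Θ : ℝ) := lt_of_lt_of_le one_pos hT1
  have hOc0 : (0:ℝ) ≤ (Fintype.card Ω : ℝ) := Nat.cast_nonneg _
  set K : ℝ := Econst (Fintype.card Θ : ℝ) (Fintype.card Ω : ℝ) m U 1 with hKdef
  have hK0 : 0 ≤ K := by
    obtain ⟨k1, k2, k3⟩ := Econst_pieces (Oc := (Fintype.card Ω : ℝ)) (le_of_lt hT0) hOc0
      hm hU0' (zero_le_one)
    rw [hKdef, Econst]
    exact add_nonneg (add_nonneg k1 k2) k3
  set B : ℝ := 2 * U / m with hBdef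
  have hB0 : 0 ≤ B := by rw [hBdef]; positivity
  have hD1 : (0:ℝ) < 4 * (Fintype.card Θ : ℝ) * (B + 1) := by nlinarith
  set η : ℝ := min (1/2) (ε / (4 * (Fintype.card Θ : ℝ) * (B + 1))) with hηdef
  have hη0 : 0 < η := lt_min one_half_pos (div_pos hε hD1)
  have hη1 : η ≤ 1/2 := min_le_left _ _
  set G : ℝ := 1 + 4 / η with hGdef
  have hG0 : (0:ℝ) < G := by
    rw [hGdef]
    have := div_pos (by norm_num : (0:ℝ) < 4) hη0
    linarith
  have hD2 : (0:ℝ) < 8 * (Fintype.card Θ : ℝ) * (K + 1) * G := by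
    have h1 : (0:ℝ) < 8 * (Fintype.card Θ : ℝ) := by linarith
    have h2 : (0:ℝ) < K + 1 := by linarith
    have := mul_pos (mul_pos h1 h2) hG0
    nlinarith
  set δ : ℝ := min (min 1 (m / (8 * (Fintype.card Θ : ℝ))))
    (ε / (8 * (Fintype.card Θ : ℝ) * (K + 1) * G)) with hδdef
  have hδ0 : 0 < δ := by
    refine lt_min (lt_min one_pos ?_) (div_pos hε hD2)
    exact div_pos hm (by linarith)
  have hδ1 : δ ≤ 1 := le_trans (min_le_left _ _) (min_le_left _ _)
  have hδ8 : δ ≤ m / (8 * (Fintype.card Θ : ℝ)) :=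
    le_trans (min_le_left _ _) (min_le_right _ _)
  have hδε : δ ≤ ε / (8 * (Fintype.card Θ : ℝ) * (K + 1) * G) := min_le_right _ _
  have hδm : δ ≤ m := le_trans hδ8 (div_le_self (le_of_lt hm) (by linarith))
  have hdm : (Fintype.card Θ : ℝ) * (2 * δ) / m ≤ 1/2 := by
    rw [div_le_iff₀ hm]
    have h8 := (le_div_iff₀ (by linarith : (0:ℝ) < 8 * (Fintype.card Θ : ℝ))).mp hδ8
    nlinarith
  -- the loss bound
  have hloss : (Fintype.card Θ : ℝ) * (η * (2 * U / m)
      + Econst (Fintype.card Θ : ℝ) (Fintype.card Ω : ℝ) m U (2 * δ)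
      + 4 * Econst (Fintype.card Θ : ℝ) (Fintype.card Ω : ℝ) m U (2 * δ) / η)
        ≤ ε / 2 := by
    have hE2 : Econst (Fintype.card Θ : ℝ) (Fintype.card Ω : ℝ) m U (2 * δ)
        = 2 * δ * K := by
      rw [Econst_linear, hKdef]
    have hη2 : η ≤ ε / (4 * (Fintype.card Θ : ℝ) * (B + 1)) := min_le_right _ _
    have h1 : (Fintype.card Θ : ℝ) * (η * (2 * U / m)) ≤ ε / 4 := by
      have hTB : 0 ≤ (Fintype.card Θ : ℝ) * B := mul_nonneg (le_of_lt hT0) hB0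
      have hA : (Fintype.card Θ : ℝ) * B * η
          ≤ (Fintype.card Θ : ℝ) * B * (ε / (4 * (Fintype.card Θ : ℝ) * (B + 1))) :=
        mul_le_mul_of_nonneg_left hη2 hTB
      have heq : (Fintype.card Θ : ℝ) * B * (ε / (4 * (Fintype.card Θ : ℝ) * (B + 1)))
          = ((Fintype.card Θ : ℝ) * B * ε) / (4 * (Fintype.card Θ : ℝ) * (B + 1)) := by
        ring
      have hC : ((Fintype.card Θ : ℝ) * B * ε) / (4 * (Fintype.card Θ : ℝ) * (B + 1))
          ≤ ε / 4 := by
        rw [div_le_div_iff₀ hD1 (by norm_num : (0:ℝ) < 4)]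
        have hTε : 0 ≤ (Fintype.card Θ : ℝ) * ε := mul_nonneg (le_of_lt hT0) (le_of_lt hε)
        nlinarith
      have hBU : (Fintype.card Θ : ℝ) * (η * (2 * U / m)) = (Fintype.card Θ : ℝ) * B * η := by
        rw [hBdef]; ring
      rw [hBU]
      linarith
    have h2 : (Fintype.card Θ : ℝ) * (Econst (Fintype.card Θ : ℝ) (Fintype.card Ω : ℝ) m U (2 * δ)
        + 4 * Econst (Fintype.card Θ : ℝ) (Fintype.card Ω : ℝ) m U (2 * δ) / η) ≤ ε / 4 := by
      have hEeq : Econst (Fintype.card Θ : ℝ) (Fintype.card Ω : ℝ) m U (2 * δ)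
          + 4 * Econst (Fintype.card Θ : ℝ) (Fintype.card Ω : ℝ) m U (2 * δ) / η
            = (2 * δ * K) * G := by
        rw [hE2, hGdef]; ring
      rw [hEeq]
      have h0 : 0 ≤ 2 * (Fintype.card Θ : ℝ) * K * G :=
        mul_nonneg (mul_nonneg (mul_nonneg (by norm_num) (le_of_lt hT0)) hK0) (le_of_lt hG0)
      have hA : (2 * (Fintype.card Θ : ℝ) * K * G) * δ
          ≤ (2 * (Fintype.card Θ : ℝ) * K * G) * (ε / (8 * (Fintype.card Θ : ℝ) * (K + 1) * G)) :=
        mul_le_mul_of_nonneg_left hδε h0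
      have heq : (2 * (Fintype.card Θ : ℝ) * K * G) * (ε / (8 * (Fintype.card Θ : ℝ) * (K + 1) * G))
          = (2 * (Fintype.card Θ : ℝ) * K * G * ε) / (8 * (Fintype.card Θ : ℝ) * (K + 1) * G) := by
        ring
      have hC : (2 * (Fintype.card Θ : ℝ) * K * G * ε) / (8 * (Fintype.card Θ : ℝ) * (K + 1) * G)
          ≤ ε / 4 := by
        rw [div_le_div_iff₀ hD2 (by norm_num : (0:ℝ) < 4)]
        have hTGε : 0 ≤ (Fintype.card Θ : ℝ) * G * ε :=
          mul_nonneg (mul_nonneg (le_of_lt hT0) (le_of_lt hG0)) (le_of_lt hε)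
        nlinarith
      have hfin : (Fintype.card Θ : ℝ) * ((2 * δ * K) * G)
          = (2 * (Fintype.card Θ : ℝ) * K * G) * δ := by ring
      rw [hfin]
      linarith
    linarith
  -- the one-sided key estimate
  have key : ∀ c c' : (Θ → Ω → A → ℝ) × (Ω → Θ → ℝ),
      c ∈ {p : (Θ → Ω → A → ℝ) × (Ω → Θ → ℝ) | IsJoint p.2 ∧ ∀ ω θ, 0 < p.2 ω θ} →
      c' ∈ {p : (Θ → Ω → A → ℝ) × (Ω → Θ → ℝ) | IsJoint p.2 ∧ ∀ ω θ, 0 < p.2 ω θ} →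
      dist c c₀ < δ → dist c' c₀ < δ →
      Rp c.1 c.2 ≤ Rp c'.1 c'.2 + ε / 2 := by
    intro c c' hcm hc'm hcd hc'd
    have hμbd : ∀ (cc : (Θ → Ω → A → ℝ) × (Ω → Θ → ℝ)), dist cc c₀ < δ →
        ∀ ω θ, m ≤ cc.2 ω θ := by
      intro cc hccd ω θ
      have h1 := lt_of_le_of_lt (hcompM cc c₀ ω θ) hccd
      have h2 := (abs_lt.mp h1).1
      have h3 := hlow ω θ
      rw [hmdef]
      linarith
    have hUbd : ∀ (cc : (Θ → Ω → A → ℝ) × (Ω → Θ → ℝ)), dist cc c₀ < δ →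
        ∀ θ ω a, |cc.1 θ ω a| ≤ U := by
      intro cc hccd θ ω a
      have h1 := lt_of_le_of_lt (hcompU cc c₀ θ ω a) hccd
      have h2 := abs_sub_abs_le_abs_sub (cc.1 θ ω a) (c₀.1 θ ω a)
      have h3 := hU0 θ ω a
      rw [hUdef]
      linarith
    have hud : ∀ θ ω a, |c.1 θ ω a - c'.1 θ ω a| ≤ 2 * δ := by
      intro θ ω a
      have h1 := hcompU c c' θ ω a
      have h2 := dist_triangle_right c c' c₀
      linarith
    have hμd : ∀ ω θ, |c.2 ω θ - c'.2 ω θ| ≤ 2 * δ := by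
      intro ω θ
      have h1 := hcompM c c' ω θ
      have h2 := dist_triangle_right c c' c₀
      linarith
    simp only [Rp]
    refine csSup_le (Set.nonempty_of_mem (zero_mem_Rp_set hcm.1)) ?_
    rintro r ⟨x, tt, hval, httn, rfl⟩
    obtain ⟨x', tt', hval', httn', hge⟩ :=
      transfer (u := c.1) (u' := c'.1) (μ := c.2) (μ' := c'.2) (d := 2 * δ) (η := η)
        hcm.1 hc'm.1 hm hU0' (hμbd c hcd) (hμbd c' hc'd) (hUbd c hcd) (hUbd c' hc'd)
        hud hμd (by linarith : (0:ℝ) < 2 * δ) hdm hη0 hη1 hval httn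
    have hle := le_csSup (Rp_set_bddAbove (u := c'.1) hc'm.1 hc'm.2)
      (⟨x', tt', hval', httn', rfl⟩ : POrev c'.2 tt' ∈
        {r | ∃ x tt, POvalid c'.1 c'.2 x tt ∧ (∀ θ q, 0 ≤ tt θ q) ∧ r = POrev c'.2 tt})
    linarith
  refine ⟨δ, hδ0, ?_⟩
  intro c hcm hcd
  have hd0 : dist c₀ c₀ < δ := by rw [dist_self]; exact hδ0
  have k1 := key c c₀ hcm hc₀ hcd hd0
  have k2 := key c₀ c hc₀ hcm hd0 hcd
  show dist (Rp c.1 c.2) (Rp c₀.1 c₀.2) < ε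
  rw [Real.dist_eq, abs_lt]
  constructor <;> linarith

end Main

end RpAux

/-- The optimal no-positive-transfers Pricing Outcomes revenue `R_p` is
continuous on the set `C°°` of non-degenerate contexts (all joint probabilities positive). -/
theorem Rp_continuous :
    ContinuousOn (fun p : (Θ → Ω → A → ℝ) × (Ω → Θ → ℝ) => Rp p.1 p.2)
      {p | IsJoint p.2 ∧ ∀ ω θ, 0 < p.2 ω θ} := by
  classical
  rcases isEmpty_or_nonempty Ω with hΩ | hΩ
  · have hempty : {p : (Θ → Ω → A → ℝ) × (Ω → Θ → ℝ) |
        IsJoint p.2 ∧ ∀ ω θ, 0 < p.2 ω θ} = ∅ := by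
      ext c
      simp only [Set.mem_setOf_eq, Set.mem_empty_iff_false, iff_false]
      rintro ⟨⟨-, h2⟩, -⟩
      rw [Finset.univ_eq_empty (α := Ω), Finset.sum_empty] at h2
      exact zero_ne_one h2
    rw [hempty]
    exact continuousOn_empty _
  · rcases isEmpty_or_nonempty Θ with hΘ | hΘ
    · have hempty : {p : (Θ → Ω → A → ℝ) × (Ω → Θ → ℝ) |
          IsJoint p.2 ∧ ∀ ω θ, 0 < p.2 ω θ} = ∅ := by
        ext c
        simp only [Set.mem_setOf_eq, Set.mem_empty_iff_false, iff_false]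
        rintro ⟨⟨-, h2⟩, -⟩
        have hz : ∑ ω, ∑ θ : Θ, c.2 ω θ = 0 := Finset.sum_eq_zero fun ω _ => by
          rw [Finset.univ_eq_empty (α := Θ), Finset.sum_empty]
        rw [hz] at h2
        exact zero_ne_one h2
      rw [hempty]
      exact continuousOn_empty _
    · exact RpAux.Rp_continuous_aux
end
end

section
/- Fix a context (u,μ) with μ(ω) > 0 for all ω ∈ Ω and μ(θ) > 0 for all θ ∈ Θ. Then R_e(u,μ) ≤ R_c(u,μ) ≤ R_p(u,μ) ≤ R(u,μ) ≤ |Θ|·R_e(u,μ). In particular, the optimal Sealed Envelope, Pricing Mappings, and no-positive-transfers Pricing Outcomes revenues are each at least a 1/|Θ| fraction of the optimal Pricing Outcomes revenue. -/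
open Finset Filter

noncomputable section

variable {Θ Ω A : Type*}

variable [Fintype Θ] [Fintype Ω] [Fintype A] [Nonempty A]

section helpers

variable {u : Θ → Ω → A → ℝ} {μ : Ω → Θ → ℝ}

lemma sup'_cmul {c : ℝ} (hc : 0 ≤ c) (f : A → ℝ) :
    c * univ.sup' univ_nonempty f = univ.sup' univ_nonempty fun a => c * f a :=
  Finset.comp_sup'_eq_sup'_comp _ (fun x => c * x) fun x y => by
    exact mul_max_of_nonneg x y hc

lemma isDist_margO (hμ : IsJoint μ) (hO : ∀ ω, 0 < margO μ ω) : IsDist (margO μ) :=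
  ⟨fun ω => (hO ω).le, by simpa [margO] using hμ.2⟩

lemma vfun_prior (hO : ∀ ω, 0 < margO μ ω) (θ : Θ) :
    vfun u θ (Dq μ θ (margO μ)) = univ.sup' univ_nonempty fun a => ∑ ω, μ ω θ * u θ ω a := by
  unfold vfun Dq
  congr 1
  funext a
  refine Finset.sum_congr rfl fun ω _ => ?_
  rw [div_mul_cancel₀ _ (hO ω).ne']

lemma surplus_key (hO : ∀ ω, 0 < margO μ ω) (hT : ∀ θ, 0 < margT μ θ) (θ : Θ) :
    margT μ θ * surplus u μ θ =
      (∑ ω, μ ω θ * maxU u θ ω) - vfun u θ (Dq μ θ (margO μ)) := by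
  have hne := (hT θ).ne'
  rw [surplus, vfun_prior hO, mul_sub]
  congr 1
  · rw [Finset.mul_sum]
    refine Finset.sum_congr rfl fun ω _ => ?_
    field_simp
  · rw [sup'_cmul (hT θ).le]
    congr 1
    funext a
    rw [Finset.mul_sum]
    refine Finset.sum_congr rfl fun ω _ => ?_
    field_simp

lemma surplus_nonneg (hμ : IsJoint μ) (hT : ∀ θ, 0 < margT μ θ) (θ : Θ) :
    0 ≤ surplus u μ θ := by
  rw [surplus, sub_nonneg]
  apply Finset.sup'_le
  intro a _
  refine Finset.sum_le_sum fun ω _ => ?_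
  exact mul_le_mul_of_nonneg_left (Finset.le_sup' _ (mem_univ a))
    (div_nonneg (hμ.1 ω θ) (hT θ).le)

lemma vfun_le_max (hμ : IsJoint μ) (hO : ∀ ω, 0 < margO μ ω) (θ : Θ) {q : Ω → ℝ}
    (hq : ∀ ω, 0 ≤ q ω) :
    vfun u θ (Dq μ θ q) ≤ ∑ ω, Dq μ θ q ω * maxU u θ ω := by
  apply Finset.sup'_le
  intro a _
  refine Finset.sum_le_sum fun ω _ => ?_
  exact mul_le_mul_of_nonneg_left (Finset.le_sup' _ (mem_univ a))
    (mul_nonneg (div_nonneg (hμ.1 ω θ) (hO ω).le) (hq ω))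

lemma pmutil_le (hμ : IsJoint μ) (hO : ∀ ω, 0 < margO μ ω) (θ : Θ)
    {x : (Ω → ℝ) →₀ ℝ} (hx : FeasRep (margO μ) x) :
    PMutil u μ θ x ≤ ∑ ω, μ ω θ * maxU u θ ω := by
  obtain ⟨hdist, hnn, hsum, havg⟩ := hx
  calc PMutil u μ θ x ≤ ∑ q ∈ x.support, (∑ ω, Dq μ θ q ω * maxU u θ ω) * x q := by
        refine Finset.sum_le_sum fun q hq => ?_
        exact mul_le_mul_of_nonneg_right (vfun_le_max hμ hO θ (hdist q hq).1) (hnn q)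
    _ = ∑ ω, (μ ω θ / margO μ ω * maxU u θ ω) * (∑ q ∈ x.support, x q * q ω) := by
        simp_rw [Finset.sum_mul, Finset.mul_sum]
        rw [Finset.sum_comm]
        refine Finset.sum_congr rfl fun ω _ => Finset.sum_congr rfl fun q _ => ?_
        rw [Dq]; ring
    _ = ∑ ω, μ ω θ * maxU u θ ω := by
        refine Finset.sum_congr rfl fun ω _ => ?_
        have hne := (hO ω).ne'
        rw [havg ω]
        field_simp

lemma onesD_sum (hO : ∀ ω, 0 < margO μ ω) (θ : Θ) {x : (Ω → ℝ) →₀ ℝ}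
    (hx : FeasRep (margO μ) x) :
    ∑ q ∈ x.support, onesD μ θ q * x q = margT μ θ := by
  simp_rw [onesD, Finset.sum_mul]
  rw [Finset.sum_comm, margT]
  refine Finset.sum_congr rfl fun ω _ => ?_
  have h1 : ∑ q ∈ x.support, Dq μ θ q ω * x q
      = μ ω θ / margO μ ω * ∑ q ∈ x.support, x q * q ω := by
    rw [Finset.mul_sum]
    exact Finset.sum_congr rfl fun q _ => by rw [Dq]; ring
  rw [h1, hx.2.2.2 ω, div_mul_cancel₀ _ (hO ω).ne']

/-- The trivial (no-information) signal representation. -/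
def trivX (μ : Ω → Θ → ℝ) : (Ω → ℝ) →₀ ℝ := Finsupp.single (margO μ) 1

lemma trivX_support : (trivX μ).support = {margO μ} :=
  Finsupp.support_single_ne_zero _ one_ne_zero

lemma feas_trivX (hμ : IsJoint μ) (hO : ∀ ω, 0 < margO μ ω) :
    FeasRep (margO μ) (trivX μ) := by
  classical
  refine ⟨?_, ?_, ?_, ?_⟩
  · intro q hq
    rw [trivX_support, Finset.mem_singleton] at hq
    subst hq
    exact isDist_margO hμ hO
  · intro q
    rw [trivX, Finsupp.single_apply]
    split <;> norm_num
  · rw [trivX_support, Finset.sum_singleton, trivX, Finsupp.single_eq_same]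
  · intro ω
    rw [trivX_support, Finset.sum_singleton, trivX, Finsupp.single_eq_same, one_mul]

lemma pmutil_trivX (θ : Θ) : PMutil u μ θ (trivX μ) = vfun u θ (Dq μ θ (margO μ)) := by
  rw [PMutil, trivX_support, Finset.sum_singleton, trivX, Finsupp.single_eq_same, mul_one]

lemma sum_fullX [DecidableEq Ω] (F : (Ω → ℝ) → ℝ) :
    ∑ q ∈ (fullX (Θ := Θ) μ).support, F q * fullX μ q = ∑ ω, F (deltaP ω) * margO μ ω := by
  have h0 : ∀ q : Ω → ℝ, F q * (0:ℝ) = 0 := fun q => mul_zero _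
  have h : ∑ q ∈ (fullX (Θ := Θ) μ).support, F q * fullX μ q
      = (fullX (Θ := Θ) μ).sum fun q c => F q * c := rfl
  rw [h, fullX, ← Finsupp.sum_finset_sum_index (fun q => h0 q) (fun q b₁ b₂ => by ring)]
  exact Finset.sum_congr rfl fun ω _ => Finsupp.sum_single_index (h0 _)

lemma isDist_deltaP [DecidableEq Ω] (ω : Ω) : IsDist (deltaP ω) := by
  constructor
  · intro ω'
    simp only [deltaP]
    split <;> norm_num
  · simp [deltaP]

lemma mem_support_fullX [DecidableEq Ω] {q : Ω → ℝ}
    (hq : q ∈ (fullX (Θ := Θ) μ).support) : ∃ ω, q = deltaP ω := by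
  rw [fullX] at hq
  obtain ⟨ω, _, hmem⟩ := Finsupp.mem_support_finset_sum q hq
  exact ⟨ω, Finset.mem_singleton.mp (Finsupp.support_single_subset hmem)⟩

lemma feas_fullX [DecidableEq Ω] (hμ : IsJoint μ) (hO : ∀ ω, 0 < margO μ ω) :
    FeasRep (margO μ) (fullX (Θ := Θ) μ) := by
  classical
  refine ⟨?_, ?_, ?_, ?_⟩
  · intro q hq
    obtain ⟨ω, rfl⟩ := mem_support_fullX hq
    exact isDist_deltaP ω
  · intro q
    rw [fullX, Finsupp.finset_sum_apply]
    refine Finset.sum_nonneg fun ω _ => ?_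
    rw [Finsupp.single_apply]
    split
    · exact (hO ω).le
    · exact le_refl 0
  · have h := sum_fullX (μ := μ) (fun _ => (1:ℝ))
    simp only [one_mul] at h
    rw [h]
    exact (isDist_margO hμ hO).2
  · intro ω
    have h := sum_fullX (μ := μ) (fun q => q ω)
    calc ∑ q ∈ (fullX (Θ := Θ) μ).support, fullX μ q * q ω
        = ∑ q ∈ (fullX (Θ := Θ) μ).support, q ω * fullX μ q :=
          Finset.sum_congr rfl fun q _ => mul_comm _ _
      _ = ∑ ω', deltaP ω' ω * margO μ ω' := h
      _ = margO μ ω := by simp [deltaP]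

lemma pmutil_fullX [DecidableEq Ω] (hμ : IsJoint μ) (hO : ∀ ω, 0 < margO μ ω) (θ : Θ) :
    PMutil u μ θ (fullX μ) = ∑ ω, μ ω θ * maxU u θ ω := by
  rw [PMutil, sum_fullX]
  refine Finset.sum_congr rfl fun ω _ => ?_
  have hfe : (fun a => ∑ ω', Dq μ θ (deltaP ω) ω' * u θ ω' a)
      = fun a => μ ω θ / margO μ ω * u θ ω a := by
    funext a
    simp [Dq, deltaP, mul_ite, ite_mul, Finset.sum_ite_eq']
  have hv : vfun u θ (Dq μ θ (deltaP ω)) = μ ω θ / margO μ ω * maxU u θ ω := by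
    rw [vfun, hfe, ← sup'_cmul (div_nonneg (hμ.1 ω θ) (hO ω).le), maxU]
  have hne := (hO ω).ne'
  rw [hv]
  field_simp

lemma poutil_eq (θ : Θ) {x tt : (Ω → ℝ) →₀ ℝ} (hsub : tt.support ⊆ x.support) :
    POutil u μ θ x tt = PMutil u μ θ x - ∑ q ∈ x.support, onesD μ θ q * tt q := by
  rw [POutil, Finset.union_eq_left.mpr hsub, Finset.sum_sub_distrib, PMutil]

lemma pay_eq (θ : Θ) {x tt : (Ω → ℝ) →₀ ℝ} (hsub : tt.support ⊆ x.support) :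
    ∑ q ∈ x.support, onesD μ θ q * tt q = ∑ q ∈ tt.support, onesD μ θ q * tt q :=
  (Finset.sum_subset hsub fun q _ hq => by
    rw [Finsupp.notMem_support_iff.mp hq, mul_zero]).symm

lemma porev_le (hμ : IsJoint μ) (hO : ∀ ω, 0 < margO μ ω) (hT : ∀ θ, 0 < margT μ θ)
    {x tt : Θ → ((Ω → ℝ) →₀ ℝ)} (hval : POvalid u μ x tt) :
    POrev μ tt ≤ ∑ θ, margT μ θ * surplus u μ θ := by
  obtain ⟨hfeas, hsub, hIR, _⟩ := hval
  rw [POrev]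
  refine Finset.sum_le_sum fun θ _ => ?_
  rw [surplus_key hO hT θ, ← pay_eq θ (hsub θ)]
  have h1 := hIR θ
  rw [poutil_eq θ (hsub θ)] at h1
  have h2 := pmutil_le (u := u) hμ hO θ (hfeas θ)
  linarith

lemma pmrev_le (hμ : IsJoint μ) (hO : ∀ ω, 0 < margO μ ω) (hT : ∀ θ, 0 < margT μ θ)
    {x : Θ → ((Ω → ℝ) →₀ ℝ)} {t : Θ → ℝ} (hval : PMvalid u μ x t) :
    PMrev μ t ≤ ∑ θ, margT μ θ * surplus u μ θ := by
  obtain ⟨hfeas, hnn, hIR, _⟩ := hval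
  refine Finset.sum_le_sum fun θ _ => ?_
  rw [surplus_key hO hT θ]
  have h1 := hIR θ
  have h2 := pmutil_le (u := u) hμ hO θ (hfeas θ)
  linarith

lemma poutil_smul (hO : ∀ ω, 0 < margO μ ω) (θ : Θ) {x : (Ω → ℝ) →₀ ℝ}
    (hx : FeasRep (margO μ) x) (c : ℝ) :
    POutil u μ θ x (c • x) = PMutil u μ θ x - margT μ θ * c := by
  rw [poutil_eq θ Finsupp.support_smul]
  congr 1
  have h : ∑ q ∈ x.support, onesD μ θ q * (c • x) q
      = c * ∑ q ∈ x.support, onesD μ θ q * x q := by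
    rw [Finset.mul_sum]
    refine Finset.sum_congr rfl fun q _ => ?_
    rw [Finsupp.smul_apply, smul_eq_mul]
    ring
  rw [h, onesD_sum hO θ hx, mul_comm]

end helpers


/-- `R_e ≤ R_c ≤ R_p ≤ R ≤ |Θ|·R_e`: the four progressively more general
classes of mechanisms have increasing optimal revenue, and each is at least a `1/|Θ|`
fraction of the optimal Pricing Outcomes revenue. -/
theorem revenue_chain (u : Θ → Ω → A → ℝ) (μ : Ω → Θ → ℝ)
    (hμ : IsJoint μ) (hO : ∀ ω, 0 < margO μ ω) (hT : ∀ θ, 0 < margT μ θ) :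
    Re u μ ≤ Rc u μ ∧ Rc u μ ≤ Rp u μ ∧ Rp u μ ≤ Rfull u μ ∧
      Rfull u μ ≤ (Fintype.card Θ : ℝ) * Re u μ := by
  classical
  have hS0 : (0:ℝ) ≤ ∑ θ, margT μ θ * surplus u μ θ :=
    Finset.sum_nonneg fun θ _ => mul_nonneg (hT θ).le (surplus_nonneg hμ hT θ)
  -- Boundedness of the various revenue sets
  have hbddRc : BddAbove {r | ∃ x t, PMvalid u μ x t ∧ r = PMrev μ t} := by
    refine ⟨∑ θ, margT μ θ * surplus u μ θ, ?_⟩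
    rintro r ⟨x, t, hval, rfl⟩
    exact pmrev_le hμ hO hT hval
  have hbddR : BddAbove {r | ∃ x tt, POvalid u μ x tt ∧ r = POrev μ tt} := by
    refine ⟨∑ θ, margT μ θ * surplus u μ θ, ?_⟩
    rintro r ⟨x, tt, hval, rfl⟩
    exact porev_le hμ hO hT hval
  have hbddRp : BddAbove {r | ∃ x tt, POvalid u μ x tt ∧ (∀ θ q, 0 ≤ tt θ q) ∧ r = POrev μ tt} := by
    refine ⟨∑ θ, margT μ θ * surplus u μ θ, ?_⟩
    rintro r ⟨x, tt, hval, _, rfl⟩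
    exact porev_le hμ hO hT hval
  have hbddRe : BddAbove {r | ∃ t : ℝ, 0 ≤ t ∧
      r = t * ∑ θ, (if 0 < margT μ θ ∧ t ≤ surplus u μ θ then margT μ θ else 0)} := by
    refine ⟨∑ θ, margT μ θ * surplus u μ θ, ?_⟩
    rintro r ⟨t, ht, rfl⟩
    rw [Finset.mul_sum]
    refine Finset.sum_le_sum fun θ _ => ?_
    rw [mul_ite, mul_zero]
    split_ifs with h
    · rw [mul_comm]
      exact mul_le_mul_of_nonneg_left h.2 (hT θ).le
    · exact mul_nonneg (hT θ).le (surplus_nonneg hμ hT θ)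
  -- Trivial menus: 0 belongs to each revenue set
  have h0Rc : (0:ℝ) ∈ {r | ∃ x t, PMvalid u μ x t ∧ r = PMrev μ t} := by
    refine ⟨fun _ => trivX μ, fun _ => 0, ⟨fun θ => feas_trivX hμ hO, fun θ => le_refl 0,
      fun θ => ?_, fun θ θ' _ => le_refl _⟩, by simp [PMrev]⟩
    rw [pmutil_trivX, mul_zero, sub_zero]
  have hPOtriv : ∀ θ : Θ, POutil u μ θ (trivX μ) 0 = vfun u θ (Dq μ θ (margO μ)) := by
    intro θ
    have h : POutil u μ θ (trivX μ) 0 = PMutil u μ θ (trivX μ) := by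
      rw [POutil, PMutil]
      simp
    rw [h, pmutil_trivX]
  have h0PO : POvalid u μ (fun _ => trivX μ) (fun _ => 0) := by
    refine ⟨fun θ => feas_trivX hμ hO, fun θ => by simp, fun θ => ?_, fun θ θ' _ => le_refl _⟩
    rw [hPOtriv θ]
  have h0rev : POrev μ (fun _ : Θ => (0 : (Ω → ℝ) →₀ ℝ)) = 0 := by simp [POrev]
  have h0R : (0:ℝ) ∈ {r | ∃ x tt, POvalid u μ x tt ∧ r = POrev μ tt} :=
    ⟨fun _ => trivX μ, fun _ => 0, h0PO, h0rev.symm⟩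
  have h0Rp : (0:ℝ) ∈ {r | ∃ x tt, POvalid u μ x tt ∧ (∀ θ q, 0 ≤ tt θ q) ∧ r = POrev μ tt} :=
    ⟨fun _ => trivX μ, fun _ => 0, h0PO, fun θ q => le_refl 0, h0rev.symm⟩
  have h0Re : (0:ℝ) ∈ {r | ∃ t : ℝ, 0 ≤ t ∧
      r = t * ∑ θ, (if 0 < margT μ θ ∧ t ≤ surplus u μ θ then margT μ θ else 0)} :=
    ⟨0, le_refl 0, (zero_mul _).symm⟩
  have hRc0 : (0:ℝ) ≤ Rc u μ := le_csSup hbddRc h0Rc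
  have hRp0 : (0:ℝ) ≤ Rp u μ := le_csSup hbddRp h0Rp
  have hR0 : (0:ℝ) ≤ Rfull u μ := le_csSup hbddR h0R
  have hRe0 : (0:ℝ) ≤ Re u μ := le_csSup hbddRe h0Re
  -- Part 1 : Re ≤ Rc
  have h1 : Re u μ ≤ Rc u μ := by
    refine Real.sSup_le ?_ hRc0
    rintro r ⟨t, ht, rfl⟩
    set x : Θ → ((Ω → ℝ) →₀ ℝ) :=
      fun θ => if t ≤ surplus u μ θ then fullX μ else trivX μ with hxdef
    set tp : Θ → ℝ := fun θ => if t ≤ surplus u μ θ then t else 0 with htpdef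
    have hPM : ∀ θ θ'' : Θ, PMutil u μ θ (x θ'') =
        if t ≤ surplus u μ θ'' then ∑ ω, μ ω θ * maxU u θ ω
        else vfun u θ (Dq μ θ (margO μ)) := by
      intro θ θ''
      by_cases hc : t ≤ surplus u μ θ''
      · rw [if_pos hc, hxdef]
        simp only [if_pos hc]
        exact pmutil_fullX hμ hO θ
      · rw [if_neg hc, hxdef]
        simp only [if_neg hc]
        exact pmutil_trivX θ
    have hIRkey : ∀ θ : Θ, t ≤ surplus u μ θ →
        vfun u θ (Dq μ θ (margO μ)) ≤ (∑ ω, μ ω θ * maxU u θ ω) - margT μ θ * t := by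
      intro θ hc
      have hk := surplus_key (u := u) hO hT θ
      have hmt : margT μ θ * t ≤ margT μ θ * surplus u μ θ :=
        mul_le_mul_of_nonneg_left hc (hT θ).le
      linarith
    have hIRkey' : ∀ θ : Θ, ¬ t ≤ surplus u μ θ →
        (∑ ω, μ ω θ * maxU u θ ω) - margT μ θ * t ≤ vfun u θ (Dq μ θ (margO μ)) := by
      intro θ hc
      have hk := surplus_key (u := u) hO hT θ
      have hmt : margT μ θ * surplus u μ θ ≤ margT μ θ * t :=
        mul_le_mul_of_nonneg_left (not_le.mp hc).le (hT θ).le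
      linarith
    have hval : PMvalid u μ x tp := by
      refine ⟨?_, ?_, ?_, ?_⟩
      · intro θ
        rw [hxdef]
        dsimp only
        split_ifs
        · exact feas_fullX hμ hO
        · exact feas_trivX hμ hO
      · intro θ
        rw [htpdef]
        dsimp only
        split_ifs
        · exact ht
        · exact le_refl 0
      · intro θ
        rw [hPM θ θ, htpdef]
        dsimp only
        split_ifs with hc
        · exact hIRkey θ hc
        · rw [mul_zero, sub_zero]
      · intro θ θ' _
        rw [hPM θ θ, hPM θ θ', htpdef]
        dsimp only
        split_ifs with hc' hc hc
        · exact le_refl _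
        · rw [mul_zero, sub_zero]
          exact (hIRkey' θ hc)
        · rw [mul_zero, sub_zero]
          exact (hIRkey θ hc)
        · exact le_refl _
    have hrev : PMrev μ tp
        = t * ∑ θ, (if 0 < margT μ θ ∧ t ≤ surplus u μ θ then margT μ θ else 0) := by
      rw [PMrev, Finset.mul_sum]
      refine Finset.sum_congr rfl fun θ _ => ?_
      rw [htpdef]
      dsimp only
      rcases le_or_gt t (surplus u μ θ) with h | h
      · rw [if_pos h, if_pos ⟨hT θ, h⟩, mul_comm]
      · rw [if_neg (not_le.mpr h), if_neg (fun hc => (not_le.mpr h) hc.2), mul_zero, mul_zero]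
    rw [← hrev]
    exact le_csSup hbddRc ⟨x, tp, hval, rfl⟩
  -- Part 2 : Rc ≤ Rp
  have h2 : Rc u μ ≤ Rp u μ := by
    refine Real.sSup_le ?_ hRp0
    rintro r ⟨x, t, hval, rfl⟩
    obtain ⟨hfeas, hnn, hIR, hIC⟩ := hval
    have hPOval : POvalid u μ x (fun θ => t θ • x θ) := by
      refine ⟨hfeas, fun θ => Finsupp.support_smul, fun θ => ?_, fun θ θ' hne => ?_⟩
      · rw [poutil_smul hO θ (hfeas θ) (t θ)]
        exact hIR θ
      · rw [poutil_smul hO θ (hfeas θ) (t θ), poutil_smul hO θ (hfeas θ') (t θ')]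
        exact hIC θ θ' hne
    have hrev : POrev μ (fun θ => t θ • x θ) = PMrev μ t := by
      rw [POrev, PMrev]
      refine Finset.sum_congr rfl fun θ _ => ?_
      rw [← pay_eq θ Finsupp.support_smul]
      have h : ∀ q, onesD μ θ q * (t θ • x θ) q = t θ * (onesD μ θ q * x θ q) := by
        intro q
        rw [Finsupp.smul_apply, smul_eq_mul]
        ring
      calc ∑ q ∈ (x θ).support, onesD μ θ q * (t θ • x θ) q
          = t θ * ∑ q ∈ (x θ).support, onesD μ θ q * x θ q := by
            rw [Finset.mul_sum]
            exact Finset.sum_congr rfl fun q _ => h q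
        _ = margT μ θ * t θ := by rw [onesD_sum hO θ (hfeas θ), mul_comm]
    refine le_csSup hbddRp ⟨x, fun θ => t θ • x θ, hPOval, ?_, hrev.symm⟩
    intro θ q
    rw [Finsupp.smul_apply, smul_eq_mul]
    exact mul_nonneg (hnn θ) ((hfeas θ).2.1 q)
  -- Part 3 : Rp ≤ Rfull
  have h3 : Rp u μ ≤ Rfull u μ := by
    refine Real.sSup_le ?_ hR0
    rintro r ⟨x, tt, hval, _, rfl⟩
    exact le_csSup hbddR ⟨x, tt, hval, rfl⟩
  -- Part 4 : Rfull ≤ |Θ| * Re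
  have hkey : ∀ θ : Θ, margT μ θ * surplus u μ θ ≤ Re u μ := by
    intro θ
    have hmem : surplus u μ θ * ∑ θ', (if 0 < margT μ θ' ∧ surplus u μ θ ≤ surplus u μ θ'
        then margT μ θ' else 0) ∈ {r | ∃ t : ℝ, 0 ≤ t ∧
        r = t * ∑ θ'', (if 0 < margT μ θ'' ∧ t ≤ surplus u μ θ'' then margT μ θ'' else 0)} :=
      ⟨surplus u μ θ, surplus_nonneg hμ hT θ, rfl⟩
    refine le_trans ?_ (le_csSup hbddRe hmem)
    have hsum : margT μ θ ≤ ∑ θ', (if 0 < margT μ θ' ∧ surplus u μ θ ≤ surplus u μ θ'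
        then margT μ θ' else 0) := by
      have hθ : (if 0 < margT μ θ ∧ surplus u μ θ ≤ surplus u μ θ
          then margT μ θ else 0) = margT μ θ := if_pos ⟨hT θ, le_refl _⟩
      rw [← hθ]
      refine Finset.single_le_sum (f := fun θ' => (if 0 < margT μ θ' ∧ surplus u μ θ ≤ surplus u μ θ' then margT μ θ' else 0)) (fun θ' _ => ?_) (mem_univ θ)
      split_ifs with h
      · exact h.1.le
      · exact le_refl 0
    rw [mul_comm]
    exact mul_le_mul_of_nonneg_left hsum (surplus_nonneg hμ hT θ)
  have h4 : Rfull u μ ≤ (Fintype.card Θ : ℝ) * Re u μ := by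
    refine Real.sSup_le ?_ (mul_nonneg (Nat.cast_nonneg _) hRe0)
    rintro r ⟨x, tt, hval, rfl⟩
    calc POrev μ tt ≤ ∑ θ, margT μ θ * surplus u μ θ := porev_le hμ hO hT hval
      _ ≤ ∑ _θ : Θ, Re u μ := Finset.sum_le_sum fun θ _ => hkey θ
      _ = (Fintype.card Θ : ℝ) * Re u μ := by
          rw [Finset.sum_const, Finset.card_univ, nsmul_eq_mul]
  exact ⟨h1, h2, h3, h4⟩

end
end

section
/- Consider the context with Θ = Ω = A = {0,1}, utility u(θ,ω,0) = ω and u(θ,ω,1) = 1 − 9ω for all θ, and joint distribution μ(0,0) = 0.3, μ(0,1) = 0.2, μ(1,0) = 0.2, μ(1,1) = 0.3 (where μ(ω,θ) denotes the probability of state ω and type θ). Then the buyer surpluses are σ(0) = 0.6 and σ(1) = 0.4, the optimal Pricing Mappings revenue is R_c(u,μ) = 0.4, and R_p(u,μ) = R(u,μ) = 0.5, which equals the full surplus; moreover R_p(u,μ) = 0.5 is achieved by the full-revelation Pricing Outcomes menu with nonnegative payments that gives every type the contract x_θ(δ_ω) = μ(ω) and charges t(ω) with t(0) = 1, t(1)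 = 0 (i.e., t̃_θ(δ_ω) = μ(ω)·t(ω)). -/
open Finset Filter

noncomputable section

variable {Θ Ω A : Type*}

variable [Fintype Θ] [Fintype Ω] [Fintype A] [Nonempty A]

/-! ### Auxiliary material for Example 6.4 -/

def U2 : Fin 2 → Fin 2 → Fin 2 → ℝ := fun _ ω a =>
  if a = 0 then ((ω : ℕ) : ℝ) else 1 - 9 * ((ω : ℕ) : ℝ)
def M2 : Fin 2 → Fin 2 → ℝ := fun ω θ => if ω = θ then 0.3 else 0.2
def T2 : Fin 2 → ℝ := fun ω => if ω = 0 then 1 else 0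

lemma sup2 {h : (univ : Finset (Fin 2)).Nonempty} (f : Fin 2 → ℝ) :
    univ.sup' h f = max (f 0) (f 1) := by
  apply le_antisymm
  · exact Finset.sup'_le _ _ fun a _ => by
      fin_cases a
      exacts [le_max_left _ _, le_max_right _ _]
  · exact max_le (Finset.le_sup' _ (mem_univ 0)) (Finset.le_sup' _ (mem_univ 1))

lemma vfun2 (θ : Fin 2) (q : Fin 2 → ℝ) :
    vfun U2 θ q = max (q 1) (q 0 - 8 * q 1) := by
  unfold vfun
  rw [sup2]
  norm_num [U2, Fin.sum_univ_two]
  ring_nf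

lemma margO2 (ω : Fin 2) : margO M2 ω = 1/2 := by
  fin_cases ω <;> norm_num [margO, M2, Fin.sum_univ_two]

lemma margT2 (θ : Fin 2) : margT M2 θ = 1/2 := by
  fin_cases θ <;> norm_num [margT, M2, Fin.sum_univ_two]

lemma DqA (θ ω : Fin 2) (q : Fin 2 → ℝ) :
    Dq M2 θ q ω = (if ω = θ then (0.6:ℝ) else 0.4) * q ω := by
  show M2 ω θ / margO M2 ω * q ω = _
  rw [margO2, M2]
  split_ifs <;> norm_num

lemma v0_bound (q : Fin 2 → ℝ) (h0 : 0 ≤ q 0) (h1 : 0 ≤ q 1) :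
    vfun U2 0 (Dq M2 0 q) ≤ 0.6 * q 0 + 0.4 * q 1 := by
  rw [vfun2, DqA, DqA]
  norm_num
  constructor <;> nlinarith

lemma v1_bound (q : Fin 2 → ℝ) (h0 : 0 ≤ q 0) (h1 : 0 ≤ q 1) :
    vfun U2 1 (Dq M2 1 q) ≤ 0.4 * q 0 + 0.6 * q 1 := by
  rw [vfun2, DqA, DqA]
  norm_num
  constructor <;> nlinarith

lemma g_bound (q : Fin 2 → ℝ) (h0 : 0 ≤ q 0) (h1 : 0 ≤ q 1) :
    2 * vfun U2 1 (Dq M2 1 q) - vfun U2 0 (Dq M2 0 q) ≤ 0.2 * q 0 + 0.8 * q 1 := by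
  rw [vfun2, vfun2, DqA, DqA, DqA, DqA]
  norm_num
  have h2 : (0.4:ℝ) * q 1 ≤ max (0.4 * q 1) (0.6 * q 0 - 8 * (0.4 * q 1)) := le_max_left _ _
  have h3 : (0.6:ℝ) * q 0 - 8 * (0.4 * q 1) ≤ max (0.4 * q 1) (0.6 * q 0 - 8 * (0.4 * q 1)) :=
    le_max_right _ _
  have h4 : max ((0.6:ℝ) * q 1) (0.4 * q 0 - 8 * (0.6 * q 1)) ≤
      (0.2 * q 0 + 0.8 * q 1 + max (0.4 * q 1) (0.6 * q 0 - 8 * (0.4 * q 1))) / 2 :=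
    max_le (by nlinarith) (by nlinarith)
  linarith


lemma sum_bound (x : (Fin 2 → ℝ) →₀ ℝ) (hx : FeasRep (margO M2) x)
    (g : (Fin 2 → ℝ) → ℝ) (c0 c1 : ℝ)
    (hg : ∀ q ∈ x.support, g q ≤ c0 * q 0 + c1 * q 1) :
    ∑ q ∈ x.support, g q * x q ≤ (c0 + c1) / 2 := by
  obtain ⟨hd, hnn, -, hm⟩ := hx
  have h1 : ∑ q ∈ x.support, g q * x q ≤ ∑ q ∈ x.support, (c0 * q 0 + c1 * q 1) * x q :=
    Finset.sum_le_sum fun q hq => mul_le_mul_of_nonneg_right (hg q hq) (hnn q)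
  have h2 : ∑ q ∈ x.support, (c0 * q 0 + c1 * q 1) * x q
      = c0 * ∑ q ∈ x.support, x q * q 0 + c1 * ∑ q ∈ x.support, x q * q 1 := by
    rw [Finset.mul_sum, Finset.mul_sum, ← Finset.sum_add_distrib]
    exact Finset.sum_congr rfl fun q _ => by ring
  rw [h2, hm 0, hm 1, margO2, margO2] at h1
  linarith

lemma PMutil_le (θ : Fin 2) (x : (Fin 2 → ℝ) →₀ ℝ) (hx : FeasRep (margO M2) x) :
    PMutil U2 M2 θ x ≤ 1/2 := by
  fin_cases θ
  · have h := sum_bound x hx (fun q => vfun U2 0 (Dq M2 0 q)) 0.6 0.4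
      (fun q hq => v0_bound q ((hx.1 q hq).1 0) ((hx.1 q hq).1 1))
    calc PMutil U2 M2 0 x = ∑ q ∈ x.support, (fun q => vfun U2 0 (Dq M2 0 q)) q * x q := rfl
    _ ≤ (0.6 + 0.4) / 2 := h
    _ = 1/2 := by norm_num
  · have h := sum_bound x hx (fun q => vfun U2 1 (Dq M2 1 q)) 0.4 0.6
      (fun q hq => v1_bound q ((hx.1 q hq).1 0) ((hx.1 q hq).1 1))
    calc PMutil U2 M2 1 x = ∑ q ∈ x.support, (fun q => vfun U2 1 (Dq M2 1 q)) q * x q := rfl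
    _ ≤ (0.4 + 0.6) / 2 := h
    _ = 1/2 := by norm_num

lemma comb_le (x : (Fin 2 → ℝ) →₀ ℝ) (hx : FeasRep (margO M2) x) :
    2 * PMutil U2 M2 1 x - PMutil U2 M2 0 x ≤ 1/2 := by
  have h := sum_bound x hx (fun q => 2 * vfun U2 1 (Dq M2 1 q) - vfun U2 0 (Dq M2 0 q)) 0.2 0.8
    (fun q hq => g_bound q ((hx.1 q hq).1 0) ((hx.1 q hq).1 1))
  have he : ∑ q ∈ x.support, (fun q => 2 * vfun U2 1 (Dq M2 1 q) - vfun U2 0 (Dq M2 0 q)) q * x q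
      = 2 * PMutil U2 M2 1 x - PMutil U2 M2 0 x := by
    unfold PMutil
    rw [Finset.mul_sum, ← Finset.sum_sub_distrib]
    exact Finset.sum_congr rfl fun q _ => by ring
  rw [he] at h
  linarith

lemma resv (θ : Fin 2) : vfun U2 θ (Dq M2 θ (margO M2)) = M2 1 θ := by
  rw [vfun2, DqA, DqA, margO2, margO2]
  fin_cases θ <;> norm_num [M2] <;> rw [max_eq_left (by norm_num)]

lemma dne : deltaP (0 : Fin 2) ≠ deltaP (1 : Fin 2) := by
  intro h
  have h0 := congrFun h 0
  norm_num [deltaP] at h0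

lemma delta_isDist (ω : Fin 2) : IsDist (deltaP ω) :=
  ⟨fun ω' => by unfold deltaP; split <;> norm_num,
   by rw [Fin.sum_univ_two]; fin_cases ω <;> norm_num [deltaP]⟩

lemma fullX_eq : fullX M2 = Finsupp.single (deltaP 0) (1/2) + Finsupp.single (deltaP 1) (1/2) := by
  unfold fullX
  rw [Fin.sum_univ_two, margO2, margO2]

lemma fullX_supp : (fullX M2).support = {deltaP 0, deltaP 1} := by
  rw [fullX_eq, Finsupp.support_add_eq, Finsupp.support_single_ne_zero _ (by norm_num),
    Finsupp.support_single_ne_zero _ (by norm_num)]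
  · rfl
  · rw [Finsupp.support_single_ne_zero _ (by norm_num),
      Finsupp.support_single_ne_zero _ (by norm_num)]
    simp [dne, Ne.symm dne]

lemma fullX_at0 : fullX M2 (deltaP 0) = 1/2 := by
  rw [fullX_eq]
  rw [Finsupp.add_apply, Finsupp.single_apply, Finsupp.single_apply]
  simp [dne, (dne.symm : deltaP (1:Fin 2) ≠ deltaP 0)]

lemma fullX_at1 : fullX M2 (deltaP 1) = 1/2 := by
  rw [fullX_eq]
  rw [Finsupp.add_apply, Finsupp.single_apply, Finsupp.single_apply]
  simp [dne, (dne.symm : deltaP (1:Fin 2) ≠ deltaP 0)]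

lemma fullT_eq : fullT M2 T2 = Finsupp.single (deltaP 0) (1/2) := by
  unfold fullT
  rw [Fin.sum_univ_two, margO2, margO2]
  norm_num [T2]

lemma fullT_supp : (fullT M2 T2).support = {deltaP 0} := by
  rw [fullT_eq, Finsupp.support_single_ne_zero _ (by norm_num)]

lemma fullT_at0 : fullT M2 T2 (deltaP 0) = 1/2 := by
  rw [fullT_eq, Finsupp.single_apply]; simp

lemma fullT_at1 : fullT M2 T2 (deltaP 1) = 0 := by
  rw [fullT_eq, Finsupp.single_apply]; simp [dne]

lemma fullT_nonneg (q : Fin 2 → ℝ) : 0 ≤ fullT M2 T2 q := by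
  rw [fullT_eq, Finsupp.single_apply]
  split <;> norm_num

lemma onesD_delta (θ ω0 : Fin 2) : onesD M2 θ (deltaP ω0) = 2 * M2 ω0 θ := by
  unfold onesD
  rw [Fin.sum_univ_two, DqA, DqA]
  fin_cases θ <;> fin_cases ω0 <;> norm_num [deltaP, M2]

lemma v_delta (θ ω0 : Fin 2) : vfun U2 θ (Dq M2 θ (deltaP ω0)) = 2 * M2 ω0 θ := by
  rw [vfun2, DqA, DqA]
  fin_cases θ <;> fin_cases ω0 <;>
    norm_num [deltaP, M2] <;>
    first
      | rw [max_eq_left (by norm_num)]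
      | rw [max_eq_right (by norm_num)]

lemma fullX_feas : FeasRep (margO M2) (fullX M2) := by
  refine ⟨?_, ?_, ?_, ?_⟩
  · intro q hq
    rw [fullX_supp] at hq
    rcases Finset.mem_insert.mp hq with h | h
    · rw [h]; exact delta_isDist 0
    · rw [Finset.mem_singleton.mp h]; exact delta_isDist 1
  · intro q
    rw [fullX_eq, Finsupp.add_apply, Finsupp.single_apply, Finsupp.single_apply]
    split <;> split <;> norm_num
  · rw [fullX_supp, Finset.sum_pair dne, fullX_at0, fullX_at1]; norm_num
  · intro ω
    rw [fullX_supp, Finset.sum_pair dne, fullX_at0, fullX_at1, margO2]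
    fin_cases ω <;> norm_num [deltaP]

lemma PMutil_fullX (θ : Fin 2) : PMutil U2 M2 θ (fullX M2) = 1/2 := by
  unfold PMutil
  rw [fullX_supp, Finset.sum_pair dne, fullX_at0, fullX_at1, v_delta, v_delta]
  fin_cases θ <;> norm_num [M2]

lemma POutil_full (θ : Fin 2) : POutil U2 M2 θ (fullX M2) (fullT M2 T2) = M2 1 θ := by
  unfold POutil
  have hu : (fullX M2).support ∪ (fullT M2 T2).support = {deltaP 0, deltaP 1} := by
    rw [fullX_supp, fullT_supp]
    apply Finset.union_eq_left.mpr
    simp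
  rw [hu, Finset.sum_pair dne, fullX_at0, fullX_at1, fullT_at0, fullT_at1,
    v_delta, v_delta, onesD_delta, onesD_delta]
  fin_cases θ <;> norm_num [M2]

lemma POrev_full : POrev M2 (fun _ : Fin 2 => fullT M2 T2) = 0.5 := by
  unfold POrev
  rw [Fin.sum_univ_two]
  simp only [fullT_supp, Finset.sum_singleton, fullT_at0, onesD_delta]
  norm_num [M2]

lemma POvalid_full : POvalid U2 M2 (fun _ => fullX M2) (fun _ => fullT M2 T2) := by
  refine ⟨fun _ => fullX_feas, ?_, ?_, ?_⟩
  · intro θ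
    rw [fullX_supp, fullT_supp]
    simp
  · intro θ
    rw [resv, POutil_full]
  · intro θ θ' _
    exact le_refl _


lemma PMvalid_full : PMvalid U2 M2 (fun _ => fullX M2) (fun _ => (2/5 : ℝ)) := by
  refine ⟨fun _ => fullX_feas, fun _ => by norm_num, ?_, ?_⟩
  · intro θ
    rw [resv, PMutil_fullX, margT2]
    fin_cases θ <;> norm_num [M2]
  · intro θ θ' _
    exact le_refl _

lemma PMrev_full : PMrev M2 (fun _ : Fin 2 => (2/5 : ℝ)) = 0.4 := by
  unfold PMrev
  rw [Fin.sum_univ_two, margT2, margT2]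
  norm_num

lemma Rc_ub : ∀ r ∈ {r | ∃ x t, PMvalid U2 M2 x t ∧ r = PMrev M2 t}, r ≤ 0.4 := by
  rintro r ⟨x, t, ⟨hfeas, -, hIR, hIC⟩, rfl⟩
  have h1 := PMutil_le 0 (x 0) (hfeas 0)
  have h2 := comb_le (x 1) (hfeas 1)
  have h3 := hIR 1
  rw [resv, margT2] at h3
  have hM : M2 1 1 = 0.3 := by norm_num [M2]
  rw [hM] at h3
  have h4 := hIC 0 1 (by decide)
  rw [margT2] at h4
  have h5 : PMrev M2 t = 1/2 * t 0 + 1/2 * t 1 := by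
    unfold PMrev
    rw [Fin.sum_univ_two, margT2, margT2]
  rw [h5]
  linarith

lemma Rc_eq : Rc U2 M2 = 0.4 := by
  have hmem : (0.4 : ℝ) ∈ {r | ∃ x t, PMvalid U2 M2 x t ∧ r = PMrev M2 t} :=
    ⟨fun _ => fullX M2, fun _ => (2/5 : ℝ), PMvalid_full, PMrev_full.symm⟩
  exact le_antisymm (csSup_le ⟨0.4, hmem⟩ Rc_ub) (le_csSup ⟨0.4, Rc_ub⟩ hmem)

lemma PO_ub : ∀ r ∈ {r | ∃ x tt, POvalid U2 M2 x tt ∧ r = POrev M2 tt}, r ≤ 0.5 := by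
  rintro r ⟨x, tt, ⟨hfeas, hsupp, hIR, -⟩, rfl⟩
  have key : ∀ θ : Fin 2, ∑ q ∈ (tt θ).support, onesD M2 θ q * tt θ q ≤ 1/2 - M2 1 θ := by
    intro θ
    have hU : (x θ).support ∪ (tt θ).support = (x θ).support :=
      Finset.union_eq_left.mpr (hsupp θ)
    have hext : ∑ q ∈ (tt θ).support, onesD M2 θ q * tt θ q
        = ∑ q ∈ (x θ).support, onesD M2 θ q * tt θ q :=
      Finset.sum_subset (hsupp θ) (fun q _ hq => by
        rw [Finsupp.notMem_support_iff.mp hq, mul_zero])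
    have hsplit : POutil U2 M2 θ (x θ) (tt θ)
        = PMutil U2 M2 θ (x θ) - ∑ q ∈ (x θ).support, onesD M2 θ q * tt θ q := by
      unfold POutil PMutil
      rw [hU, Finset.sum_sub_distrib]
    have h3 := hIR θ
    rw [resv, hsplit] at h3
    have h4 := PMutil_le θ (x θ) (hfeas θ)
    rw [hext]
    linarith
  have k0 := key 0
  have k1 := key 1
  have hM0 : M2 1 0 = 0.2 := by norm_num [M2]
  have hM1 : M2 1 1 = 0.3 := by norm_num [M2]
  rw [hM0] at k0
  rw [hM1] at k1
  unfold POrev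
  rw [Fin.sum_univ_two]
  linarith

lemma Rfull_eq : Rfull U2 M2 = 0.5 := by
  have hmem : (0.5 : ℝ) ∈ {r | ∃ x tt, POvalid U2 M2 x tt ∧ r = POrev M2 tt} :=
    ⟨fun _ => fullX M2, fun _ => fullT M2 T2, POvalid_full, POrev_full.symm⟩
  exact le_antisymm (csSup_le ⟨0.5, hmem⟩ PO_ub) (le_csSup ⟨0.5, PO_ub⟩ hmem)

lemma Rp_eq : Rp U2 M2 = 0.5 := by
  have hub : ∀ r ∈ {r | ∃ x tt, POvalid U2 M2 x tt ∧ (∀ θ q, 0 ≤ tt θ q) ∧ r = POrev M2 tt},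
      r ≤ 0.5 := by
    rintro r ⟨x, tt, hv, -, rfl⟩
    exact PO_ub _ ⟨x, tt, hv, rfl⟩
  have hmem : (0.5 : ℝ) ∈ {r | ∃ x tt, POvalid U2 M2 x tt ∧ (∀ θ q, 0 ≤ tt θ q) ∧
      r = POrev M2 tt} :=
    ⟨fun _ => fullX M2, fun _ => fullT M2 T2, POvalid_full, fun _ q => fullT_nonneg q,
      POrev_full.symm⟩
  exact le_antisymm (csSup_le ⟨0.5, hmem⟩ hub) (le_csSup ⟨0.5, hub⟩ hmem)

lemma surplus0 : surplus U2 M2 0 = 0.6 := by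
  unfold surplus
  rw [Fin.sum_univ_two, sup2, Fin.sum_univ_two, Fin.sum_univ_two, margT2]
  have hm : ∀ ω : Fin 2, maxU U2 0 ω = 1 := by
    intro ω
    unfold maxU
    rw [sup2]
    fin_cases ω <;> norm_num [U2]
  rw [hm 0, hm 1]
  norm_num [M2, U2]

lemma surplus1 : surplus U2 M2 1 = 0.4 := by
  unfold surplus
  rw [Fin.sum_univ_two, sup2, Fin.sum_univ_two, Fin.sum_univ_two, margT2]
  have hm : ∀ ω : Fin 2, maxU U2 1 ω = 1 := by
    intro ω
    unfold maxU
    rw [sup2]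
    fin_cases ω <;> norm_num [U2]
  rw [hm 0, hm 1]
  norm_num [M2, U2]

lemma fullSurplus_eq : fullSurplus U2 M2 = 0.5 := by
  unfold fullSurplus
  rw [Fin.sum_univ_two, margT2, margT2, surplus0, surplus1]
  norm_num

/-- Example 6.4 of the paper. In the context with
`Θ = Ω = A = {0,1}`, `u(θ,ω,0) = ω`, `u(θ,ω,1) = 1 − 9ω` and
`μ(0,0) = μ(1,1) = 0.3`, `μ(0,1) = μ(1,0) = 0.2`, the buyer surpluses are `σ(0) = 0.6` and
`σ(1) = 0.4`, the optimal Pricing Mappings revenue is `0.4`, and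
`R_p = R = 0.5`, the full surplus; moreover `0.5` is achieved by the full-revelation
Pricing Outcomes menu with nonnegative payments that gives every type the contract
`x_θ(δ_ω) = μ(ω)` and charges `t(0) = 1`, `t(1) = 0`. -/
theorem example_context_computations :
    let u : Fin 2 → Fin 2 → Fin 2 → ℝ := fun _ ω a =>
      if a = 0 then ((ω : ℕ) : ℝ) else 1 - 9 * ((ω : ℕ) : ℝ)
    let μ : Fin 2 → Fin 2 → ℝ := fun ω θ => if ω = θ then 0.3 else 0.2
    let t : Fin 2 → ℝ := fun ω => if ω = 0 then 1 else 0
    surplus u μ 0 = 0.6 ∧ surplus u μ 1 = 0.4 ∧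
    Rc u μ = 0.4 ∧ Rp u μ = 0.5 ∧ Rfull u μ = 0.5 ∧
    fullSurplus u μ = 0.5 ∧
    POvalid u μ (fun _ => fullX μ) (fun _ => fullT μ t) ∧
    (∀ q, 0 ≤ fullT μ t q) ∧
    POrev μ (fun _ => fullT μ t) = 0.5 := by
  intro u μ t
  exact ⟨surplus0, surplus1, Rc_eq, Rp_eq, Rfull_eq, fullSurplus_eq, POvalid_full,
    fullT_nonneg, POrev_full⟩
end
end
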